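/- arXiv:1709.02176 — 6 statements merged into one kernel-verified Lean document; each statement's English description precedes it below -/
import Mathlib

section
/- Let A be a Hopf algebra and let L, M be left normal coideal subalgebras of A (subalgebras L with Δ(L) ⊆ A ⊗ L closed under the left adjoint action a·l = a₁ l S(a₂)). Then LM = ML as subspaces of A. -/
open scoped TensorProduct
open Coalgebra

noncomputable section
namespace Burciu

variable (k : Type*) [Field k] (A : Type*) [Ring A] [HopfAlgebra k A]

/-- The left adjoint action, `adL (a ⊗ l) = a₁ * l * S(a₂)`. -/
def adL : A ⊗[k] A →ₗ[k] A :=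
  (LinearMap.mul' k A) ∘ₗ
  (LinearMap.lTensor A (LinearMap.mul' k A)) ∘ₗ
  (LinearMap.lTensor A (LinearMap.lTensor A (HopfAlgebra.antipode (R := k)))) ∘ₗ
  (LinearMap.lTensor A (TensorProduct.comm k A A).toLinearMap) ∘ₗ
  (TensorProduct.assoc k A A A).toLinearMap ∘ₗ
  (LinearMap.rTensor A (Coalgebra.comul (R := k)))

/-- The right adjoint action, `adR (a ⊗ l) = S(a₁) * l * a₂`. -/
def adR : A ⊗[k] A →ₗ[k] A :=
  (LinearMap.mul' k A) ∘ₗ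
  (LinearMap.rTensor A (LinearMap.mul' k A)) ∘ₗ
  (TensorProduct.assoc k A A A).symm.toLinearMap ∘ₗ
  (LinearMap.rTensor (A ⊗[k] A) (HopfAlgebra.antipode (R := k))) ∘ₗ
  (LinearMap.lTensor A (TensorProduct.comm k A A).toLinearMap) ∘ₗ
  (TensorProduct.assoc k A A A).toLinearMap ∘ₗ
  (LinearMap.rTensor A (Coalgebra.comul (R := k)))

variable {k A} in
/-- `L` is a left coideal subalgebra: `Δ(L) ⊆ A ⊗ L`. -/
def IsLeftCoideal (L : Subalgebra k A) : Prop :=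
  ∀ l ∈ L, Coalgebra.comul (R := k) l ∈
    LinearMap.range (LinearMap.lTensor A (Subalgebra.toSubmodule L).subtype)

variable {k A} in
/-- `L` is a left normal coideal subalgebra: a left coideal subalgebra closed
under the left adjoint action `a · l = a₁ l S(a₂)`. -/
def IsLNCS (L : Subalgebra k A) : Prop :=
  IsLeftCoideal L ∧ ∀ a : A, ∀ l ∈ L, adL k A (a ⊗ₜ[k] l) ∈ L

variable {k A} in
/-- `L` is a Hopf subalgebra: a subalgebra with `Δ(L) ⊆ L ⊗ L` and `S(L) ⊆ L`. -/
def IsHopfSubalgebra (L : Subalgebra k A) : Prop :=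
  (∀ l ∈ L, Coalgebra.comul (R := k) l ∈
    LinearMap.range (TensorProduct.map (Subalgebra.toSubmodule L).subtype
      (Subalgebra.toSubmodule L).subtype)) ∧
  ∀ l ∈ L, HopfAlgebra.antipode (R := k) l ∈ L

variable {k A} in
/-- `L` is a normal Hopf subalgebra: a Hopf subalgebra stable under both
adjoint actions. -/
def IsNormalHopfSubalgebra (L : Subalgebra k A) : Prop :=
  IsHopfSubalgebra L ∧ (∀ a : A, ∀ l ∈ L, adL k A (a ⊗ₜ[k] l) ∈ L) ∧
    (∀ a : A, ∀ l ∈ L, adR k A (a ⊗ₜ[k] l) ∈ L)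

/-- The augmentation ideal `A L⁺`, where `L⁺ = L ∩ ker ε`. -/
def ALplus (L : Subalgebra k A) : Submodule k A :=
  (⊤ : Submodule k A) *
    (Subalgebra.toSubmodule L ⊓ LinearMap.ker (Coalgebra.counit (R := k) (A := A)))

/-- The right hit action `a ↼ f = f(a₁) a₂`, as a linear endomorphism of `A`. -/
def hit (f : Module.Dual k A) : A →ₗ[k] A :=
  (TensorProduct.lid k A).toLinearMap ∘ₗ (LinearMap.rTensor A f) ∘ₗ (Coalgebra.comul (R := k))

/-- Convolution product on the dual `A*`. -/
def conv (f g : Module.Dual k A) : Module.Dual k A :=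
  (LinearMap.mul' k k) ∘ₗ (TensorProduct.map f g) ∘ₗ (Coalgebra.comul (R := k))

variable {k A} in
/-- The cocommutative elements of `A*`; for a semisimple Hopf algebra these are
exactly the span of the irreducible characters, i.e. the character ring `C(A)`. -/
def IsCocom (f : Module.Dual k A) : Prop := ∀ a b : A, f (a * b) = f (b * a)

variable {k A} in
/-- The Hopf subalgebra `(A//N)* = {f ∈ A* | f(al) = ε(l) f(a) ∀ a ∈ A, l ∈ N} ⊆ A*`
attached to a subspace `N ⊆ A`. -/
def dualQuot (N : Submodule k A) : Set (Module.Dual k A) :=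
  {f | ∀ a : A, ∀ l ∈ N, f (a * l) = Coalgebra.counit (R := k) l * f a}

/-- The axioms for an R-matrix making `(A, R)` quasitriangular. -/
structure IsRMatrix (R : A ⊗[k] A) : Prop where
  isUnit : IsUnit R
  quasi : ∀ x : A, R * (Coalgebra.comul (R := k) x) =
    (TensorProduct.comm k A A (Coalgebra.comul (R := k) x)) * R
  comul_left : LinearMap.rTensor A (Coalgebra.comul (R := k)) R =
    (LinearMap.rTensor A ((TensorProduct.mk k A A).flip 1) R) *
      (LinearMap.rTensor A (TensorProduct.mk k A A 1) R)
  comul_right : LinearMap.lTensor A (Coalgebra.comul (R := k)) R =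
    (LinearMap.lTensor A (TensorProduct.mk k A A 1) R) *
      (LinearMap.lTensor A ((TensorProduct.mk k A A).flip 1) R)
  counit_left : (TensorProduct.lid k A) (LinearMap.rTensor A (Coalgebra.counit (R := k)) R) = 1
  counit_right : (TensorProduct.rid k A) (LinearMap.lTensor A (Coalgebra.counit (R := k)) R) = 1

/-- The monodromy matrix `Q = R₂₁ R`. -/
def Qmat (R : A ⊗[k] A) : A ⊗[k] A := (TensorProduct.comm k A A R) * R

/-- The Drinfeld map `φ_R(f) = (f ⊗ id)(R₂₁ R)`. -/
def phiR (R : A ⊗[k] A) (f : Module.Dual k A) : A :=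
  (TensorProduct.lid k A) (LinearMap.rTensor A f (Qmat k A R))

/-- The second Drinfeld map `_Rφ(f) = (id ⊗ f)(R₂₁ R)`. -/
def phiR' (R : A ⊗[k] A) (f : Module.Dual k A) : A :=
  (TensorProduct.rid k A) (LinearMap.lTensor A f (Qmat k A R))

variable {k A} in
/-- The monodromy `c_{W,V} ∘ c_{V,W}`, i.e. the action of `Q = R₂₁R`, is the
identity on `V ⊗ W`: the two representations centralize each other. -/
def QactsTrivially {V W : Type*} [AddCommGroup V] [Module k V] [AddCommGroup W] [Module k W]
    (R : A ⊗[k] A) (ρ : A →ₐ[k] Module.End k V) (σ : A →ₐ[k] Module.End k W) : Prop :=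
  (TensorProduct.homTensorHomMap (RingHom.id k) V W V W)
    (TensorProduct.map ρ.toLinearMap σ.toLinearMap (Qmat k A R)) = LinearMap.id

variable {k A} in
/-- A subset of `A` acts through the counit in a representation; for a left
normal coideal subalgebra `L` this says the module lies in `Rep(A//L)`. -/
def ActsTriviallyOn {V : Type*} [AddCommGroup V] [Module k V]
    (ρ : A →ₐ[k] Module.End k V) (L : Set A) : Prop :=
  ∀ l ∈ L, ρ l = (Coalgebra.counit (R := k) l) • (1 : Module.End k V)

variable {k A} in
/-- The character of a finite-dimensional representation. -/
def char {V : Type*} [AddCommGroup V] [Module k V]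
    (ρ : A →ₐ[k] Module.End k V) : Module.Dual k A :=
  (LinearMap.trace k V) ∘ₗ ρ.toLinearMap

end Burciu
end

open Burciu
open scoped TensorProduct

/-! In Sweedler notation, with `a · m = a₁ m S(a₂)`, coassociativity and `S(l₁) l₂ = ε(l)` give
`l m = l₁ m S(l₂) l₃ = (l₁ · m) l₂`. If `L` is a left coideal then `l₂ ∈ L`, and if `M` is
stable under the adjoint action then `l₁ · m ∈ M`; hence `LM ⊆ ML`, and by symmetry `LM = ML`. -/

open Coalgebra HopfAlgebra TensorProduct LinearMap

theorem Submodule.mul'_map_subtype_mem_mul {R S V : Type*} [CommSemiring R] [Semiring S]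
    [Algebra R S] [AddCommMonoid V] [Module R V] {P N : Submodule R S} {f : V →ₗ[R] S}
    (hf : ∀ v, f v ∈ P) (t : V ⊗[R] N) : mul' R S (TensorProduct.map f N.subtype t) ∈ P * N := by
  induction t using TensorProduct.induction_on with
  | zero => simp
  | tmul v n => exact Submodule.mul_mem_mul (hf v) n.2
  | add x y hx hy => rw [map_add, map_add]; exact add_mem hx hy

theorem LinearMap.mul'_rTensor_mul'_map_assoc_symm {R A : Type*} [CommSemiring R] [Semiring A]
    [Algebra R A] (f g : A →ₗ[R] A) :
    mul' R A ∘ₗ rTensor A (mul' R A ∘ₗ map f g) ∘ₗ (TensorProduct.assoc R A A A).symm =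
      mul' R A ∘ₗ map f (mul' R A ∘ₗ rTensor A g) := by
  ext x y z
  simp [mul_assoc]

namespace Burciu

variable {k A : Type*} [Field k] [Ring A] [HopfAlgebra k A]

theorem flip_curry_adL (m : A) :
    (curry (adL k A)).flip m = mul' k A ∘ₗ map (mulRight k m) (antipode k) ∘ₗ comul := by
  ext a
  simp only [flip_apply, curry_apply, adL, comp_apply, LinearEquiv.coe_coe, rTensor_tmul]
  induction comul (R := k) a using TensorProduct.induction_on with
  | zero => simp
  | tmul b c => simp [mul_assoc]
  | add x y hx hy => simp_all [add_tmul]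

theorem mul'_rTensor_adL_comul (l m : A) :
    mul' k A (rTensor A ((curry (adL k A)).flip m) (comul l)) = l * m := by
  calc mul' k A (rTensor A ((curry (adL k A)).flip m) (comul l))
      = mul' k A (rTensor A (mul' k A ∘ₗ map (mulRight k m) (antipode k))
          ((TensorProduct.assoc k A A A).symm (lTensor A comul (comul l)))) := by
        rw [flip_curry_adL, ← comp_assoc, rTensor_comp_apply, coassoc_symm_apply]
    _ = mul' k A (map (mulRight k m) (mul' k A ∘ₗ rTensor A (antipode k) ∘ₗ comul) (comul l)) := by
        rw [← comp_assoc, ← map_lTensor]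
        exact congr($(mul'_rTensor_mul'_map_assoc_symm (mulRight k m) (antipode k)) _)
    _ = l * m := by
        rw [mul_antipode_rTensor_comul, ← map_lTensor, lTensor_counit_comul]
        simp

theorem IsLeftCoideal.mul_le_mul_of_adL_mem {L M : Subalgebra k A} (hL : IsLeftCoideal L)
    (hM : ∀ a : A, ∀ m ∈ M, adL k A (a ⊗ₜ[k] m) ∈ M) :
    Subalgebra.toSubmodule L * Subalgebra.toSubmodule M ≤
      Subalgebra.toSubmodule M * Subalgebra.toSubmodule L := by
  refine Submodule.mul_le.2 fun l hl m hm => ?_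
  obtain ⟨t, ht⟩ := hL l hl
  rw [← mul'_rTensor_adL_comul (k := k), ← ht, ← comp_apply (rTensor A _), rTensor_comp_lTensor]
  exact Submodule.mul'_map_subtype_mem_mul (fun a => hM a m hm) t

end Burciu

/-- For left normal coideal subalgebras `L, M` of a Hopf
algebra `A`, one has `LM = ML` as subspaces of `A`. -/
theorem product_of_left_normal_coideal_subalgebras_comm
    {k : Type*} [Field k] {A : Type*} [Ring A] [HopfAlgebra k A]
    (L M : Subalgebra k A) (hL : IsLNCS L) (hM : IsLNCS M) :
    Subalgebra.toSubmodule L * Subalgebra.toSubmodule M =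
      Subalgebra.toSubmodule M * Subalgebra.toSubmodule L :=
  le_antisymm (hL.1.mul_le_mul_of_adL_mem hM.2) (hM.1.mul_le_mul_of_adL_mem hL.2)
end

section
/- Let A be a finite-dimensional Hopf algebra and L a left normal coideal subalgebra with idempotent integral Λ_L (the unique element of L with ε(Λ_L)=1 and l Λ_L = ε(l) Λ_L for all l ∈ L). Then Λ_L ⇀ A* = (A//L)*, where (A//L)* = {f ∈ A* : f(al) = ε(l) f(a) for all a ∈ A, l ∈ L} and (Λ_L ⇀ f)(a) = f(a Λ_L). -/
open scoped TensorProduct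
open Coalgebra

namespace Burciu

variable {k A : Type*} [Field k] [Ring A] [HopfAlgebra k A]

theorem comp_mulRight_mem_dualQuot {N : Submodule k A} {Λ : A}
    (hint : ∀ l ∈ N, l * Λ = Coalgebra.counit (R := k) l • Λ) (f : Module.Dual k A) :
    f ∘ₗ LinearMap.mulRight k Λ ∈ dualQuot N := fun a l hl => by
  simp only [LinearMap.comp_apply, LinearMap.mulRight_apply, mul_assoc, hint l hl,
    Algebra.mul_smul_comm, map_smul, smul_eq_mul]

theorem comp_mulRight_eq_self_of_mem_dualQuot {N : Submodule k A} {Λ : A} (hmem : Λ ∈ N)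
    (hcounit : Coalgebra.counit (R := k) Λ = 1) {f : Module.Dual k A} (hf : f ∈ dualQuot N) :
    f ∘ₗ LinearMap.mulRight k Λ = f :=
  LinearMap.ext fun a => (hf a Λ hmem).trans (by rw [hcounit, one_mul])

end Burciu

open Burciu
open scoped TensorProduct
theorem hit_integral_range_eq_dualQuot_general
    {k : Type*} [Field k] {A : Type*} [Ring A] [HopfAlgebra k A]
    (L : Subalgebra k A) (Λ : A) (hmem : Λ ∈ L)
    (hcounit : Coalgebra.counit (R := k) Λ = 1)
    (hint : ∀ l ∈ L, l * Λ = Coalgebra.counit (R := k) l • Λ) :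
    Set.range (fun f : Module.Dual k A => f ∘ₗ LinearMap.mulRight k Λ) =
      dualQuot (Subalgebra.toSubmodule L) :=
  (Set.range_subset_iff.2 (comp_mulRight_mem_dualQuot hint)).antisymm fun f hf =>
    ⟨f, comp_mulRight_eq_self_of_mem_dualQuot hmem hcounit hf⟩

/-- If `Λ_L` is the idempotent integral of a left normal
coideal subalgebra `L` of a finite-dimensional Hopf algebra `A`, then
`Λ_L ⇀ A* = (A//L)*`, where `(Λ_L ⇀ f)(a) = f(a Λ_L)`. -/
theorem hit_integral_range_eq_dualQuot
    {k : Type*} [Field k] {A : Type*} [Ring A] [HopfAlgebra k A] [FiniteDimensional k A]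
    (L : Subalgebra k A) (hL : IsLNCS L) (Λ : A) (hmem : Λ ∈ L)
    (hcounit : Coalgebra.counit (R := k) Λ = 1)
    (hint : ∀ l ∈ L, l * Λ = Coalgebra.counit (R := k) l • Λ) :
    Set.range (fun f : Module.Dual k A => f ∘ₗ LinearMap.mulRight k Λ) =
      dualQuot (Subalgebra.toSubmodule L) :=
  hit_integral_range_eq_dualQuot_general L Λ hmem hcounit hint
end

section
/- Let A be a semisimple Hopf algebra and L a left normal coideal subalgebra whose integral Λ_L is central in A. Then the augmentation ideal A L⁺ equals A(1 − Λ_L), which equals the annihilator Ann_A(Λ_L) = {a ∈ A : a Λ_L = 0}. -/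
open scoped TensorProduct
open Coalgebra

namespace Burciu

theorem ker_mulRight_le_range_mulRight_one_sub {k A : Type*} [CommSemiring k] [Ring A]
    [Algebra k A] (e : A) :
    LinearMap.ker (LinearMap.mulRight k e) ≤ LinearMap.range (LinearMap.mulRight k (1 - e)) :=
  fun a (ha : a * e = 0) => ⟨a, by simp [mul_sub, ha]⟩

theorem range_mulRight_le_top_mul {k A : Type*} [CommSemiring k] [Semiring A] [Algebra k A]
    {N : Submodule k A} {x : A} (hx : x ∈ N) :
    LinearMap.range (LinearMap.mulRight k x) ≤ ⊤ * N := by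
  rintro _ ⟨a, rfl⟩
  exact Submodule.mul_mem_mul Submodule.mem_top hx

section Integral

variable {k : Type*} [Field k] {A : Type*} [Ring A] [HopfAlgebra k A]
  {L : Subalgebra k A} {Λ : A}

theorem ALplus_le_ker_mulRight (hint : ∀ l ∈ L, l * Λ = counit (R := k) l • Λ) :
    ALplus k A L ≤ LinearMap.ker (LinearMap.mulRight k Λ) := by
  refine Submodule.mul_le.2 fun a _ l ⟨hlL, (hle : counit (R := k) l = 0)⟩ => ?_
  change a * l * Λ = 0
  rw [mul_assoc, hint l hlL, hle, zero_smul, mul_zero]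

theorem one_sub_mem_toSubmodule_inf_ker_counit (hmem : Λ ∈ L)
    (hcounit : counit (R := k) Λ = 1) :
    1 - Λ ∈ Subalgebra.toSubmodule L ⊓ LinearMap.ker (counit (R := k) (A := A)) :=
  ⟨L.sub_mem L.one_mem hmem, by simp [hcounit]⟩

end Integral

end Burciu

open Burciu
open scoped TensorProduct
theorem aug_ideal_eq_ann_integral_general
    {k : Type*} [Field k]
    {A : Type*} [Ring A] [HopfAlgebra k A]
    (L : Subalgebra k A) (Λ : A) (hmem : Λ ∈ L)
    (hcounit : Coalgebra.counit (R := k) Λ = 1)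
    (hint : ∀ l ∈ L, l * Λ = Coalgebra.counit (R := k) l • Λ) :
    ALplus k A L = LinearMap.range (LinearMap.mulRight k (1 - Λ)) ∧
      ALplus k A L = LinearMap.ker (LinearMap.mulRight k Λ) := by
  have hker := ALplus_le_ker_mulRight hint
  have hrange := ker_mulRight_le_range_mulRight_one_sub (k := k) Λ
  have hAL : LinearMap.range (LinearMap.mulRight k (1 - Λ)) ≤ ALplus k A L :=
    range_mulRight_le_top_mul (one_sub_mem_toSubmodule_inf_ker_counit hmem hcounit)
  exact ⟨le_antisymm (hker.trans hrange) hAL, le_antisymm hker (hrange.trans hAL)⟩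

/-- If `L` is a left normal coideal subalgebra of a semisimple
Hopf algebra `A` whose integral `Λ_L` is central, then
`A L⁺ = A (1 - Λ_L) = Ann_A(Λ_L)`. -/
theorem aug_ideal_eq_ann_integral
    {k : Type*} [Field k] [IsAlgClosed k] [CharZero k]
    {A : Type*} [Ring A] [HopfAlgebra k A] [FiniteDimensional k A] [IsSemisimpleRing A]
    (L : Subalgebra k A) (hL : IsLNCS L) (Λ : A) (hmem : Λ ∈ L)
    (hcounit : Coalgebra.counit (R := k) Λ = 1)
    (hint : ∀ l ∈ L, l * Λ = Coalgebra.counit (R := k) l • Λ)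
    (hcentral : ∀ a : A, a * Λ = Λ * a) :
    ALplus k A L = LinearMap.range (LinearMap.mulRight k (1 - Λ)) ∧
      ALplus k A L = LinearMap.ker (LinearMap.mulRight k Λ) :=
  aug_ideal_eq_ann_integral_general L Λ hmem hcounit hint
end

section
/- Let (A,R) be a semisimple quasitriangular Hopf algebra and L a left normal coideal subalgebra. Then the Müger centralizer of Rep(A//L) in Rep(A) equals Rep(A//M) where M = φ_R((A//L)*) is the image under the Drinfeld map of the Hopf subalgebra (A//L)* ⊆ A*. -/
open scoped TensorProduct
open Coalgebra

open Burciu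
open scoped TensorProduct
universe u

noncomputable section HopfAux
namespace BurciuAux

open TensorProduct LinearMap Finset

variable {k : Type*} [Field k] {A : Type*} [Ring A] [HopfAlgebra k A]

local notation "S" => (HopfAlgebra.antipode (R := k) (A := A))
local notation "ε" => (Coalgebra.counit (R := k) (A := A))

lemma counit_right_collapse {ι : Type*} {a : A} (r : Coalgebra.Repr k a ι) :
    ∑ i ∈ r.index, ε (r.right i) • r.left i = a := by
  have h := Coalgebra.sum_tmul_counit_eq (R := k) r
  calc ∑ i ∈ r.index, ε (r.right i) • r.left i
      = TensorProduct.rid k A (∑ i ∈ r.index, r.left i ⊗ₜ[k] ε (r.right i)) := by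
        rw [map_sum]; simp [TensorProduct.rid_tmul]
    _ = TensorProduct.rid k A (a ⊗ₜ[k] 1) := by rw [h]
    _ = a := by simp

lemma counit_left_collapse {ι : Type*} {a : A} (r : Coalgebra.Repr k a ι) :
    ∑ i ∈ r.index, ε (r.left i) • r.right i = a := by
  have h := Coalgebra.sum_counit_tmul_eq (R := k) r
  calc ∑ i ∈ r.index, ε (r.left i) • r.right i
      = TensorProduct.lid k A (∑ i ∈ r.index, ε (r.left i) ⊗ₜ[k] r.right i) := by
        rw [map_sum]; simp [TensorProduct.lid_tmul]
    _ = TensorProduct.lid k A ((1 : k) ⊗ₜ[k] a) := by rw [h]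
    _ = a := by simp

/-- Product representation: `Δ(ab) = Δa · Δb`. -/
def mulRepr {ι κ : Type*} {a b : A} (ra : Coalgebra.Repr k a ι) (rb : Coalgebra.Repr k b κ) :
    Coalgebra.Repr k (a * b) (ι × κ) where
  index := ra.index ×ˢ rb.index
  left p := ra.left p.1 * rb.left p.2
  right p := ra.right p.1 * rb.right p.2
  eq := by
    rw [Bialgebra.comul_mul, ← ra.eq, ← rb.eq, Finset.sum_mul_sum, Finset.sum_product]
    simp [Algebra.TensorProduct.tmul_mul_tmul]

@[simp] lemma mulRepr_left {ι κ : Type*} {a b : A} (ra : Coalgebra.Repr k a ι) (rb : Coalgebra.Repr k b κ)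
    (p : ra.ι × rb.ι) : (mulRepr ra rb).left p = ra.left p.1 * rb.left p.2 := rfl

@[simp] lemma mulRepr_right {ι κ : Type*} {a b : A} (ra : Coalgebra.Repr k a ι) (rb : Coalgebra.Repr k b κ)
    (p : ra.ι × rb.ι) : (mulRepr ra rb).right p = ra.right p.1 * rb.right p.2 := rfl

@[simp] lemma mulRepr_index {ι κ : Type*} {a b : A} (ra : Coalgebra.Repr k a ι) (rb : Coalgebra.Repr k b κ) :
    (mulRepr ra rb).index = ra.index ×ˢ rb.index := rfl

/-- Build a trilinear map from a function with bilinearity proofs. -/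
def mk₃ {B : Type*} [AddCommGroup B] [Module k B] (f : A → A → A → B)
    (h1 : ∀ x y a b, f (x + y) a b = f x a b + f y a b)
    (h2 : ∀ (c : k) x a b, f (c • x) a b = c • f x a b)
    (h3 : ∀ a x y b, f a (x + y) b = f a x b + f a y b)
    (h4 : ∀ (c : k) a x b, f a (c • x) b = c • f a x b)
    (h5 : ∀ a b x y, f a b (x + y) = f a b x + f a b y)
    (h6 : ∀ (c : k) a b x, f a b (c • x) = c • f a b x) :
    A →ₗ[k] A →ₗ[k] A →ₗ[k] B where
  toFun a := LinearMap.mk₂ k (f a) (h3 a) (fun c => h4 c a) (h5 a) (fun c => h6 c a)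
  map_add' x y := by
    ext a b; exact h1 x y a b
  map_smul' c x := by
    ext a b; exact h2 c x a b

@[simp] lemma mk₃_apply {B : Type*} [AddCommGroup B] [Module k B] {f : A → A → A → B}
    {h1 : ∀ x y a b, f (x + y) a b = f x a b + f y a b}
    {h2 : ∀ (c : k) x a b, f (c • x) a b = c • f x a b}
    {h3 : ∀ a x y b, f a (x + y) b = f a x b + f a y b}
    {h4 : ∀ (c : k) a x b, f a (c • x) b = c • f a x b}
    {h5 : ∀ a b x y, f a b (x + y) = f a b x + f a b y}
    {h6 : ∀ (c : k) a b x, f a b (c • x) = c • f a b x}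
    (a b c : A) : mk₃ f h1 h2 h3 h4 h5 h6 a b c = f a b c := rfl

/-- Evaluate a trilinear map on `A ⊗ (A ⊗ A)`. -/
def lift3 {B : Type*} [AddCommGroup B] [Module k B] (T : A →ₗ[k] A →ₗ[k] A →ₗ[k] B) :
    A ⊗[k] (A ⊗[k] A) →ₗ[k] B :=
  TensorProduct.lift
    { toFun := fun a => TensorProduct.lift (T a)
      map_add' := fun x y => TensorProduct.ext' (fun a b => by simp)
      map_smul' := fun c x => TensorProduct.ext' (fun a b => by simp) }

@[simp] lemma lift3_tmul {B : Type*} [AddCommGroup B] [Module k B]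
    (T : A →ₗ[k] A →ₗ[k] A →ₗ[k] B) (a b c : A) :
    lift3 T (a ⊗ₜ[k] (b ⊗ₜ[k] c)) = T a b c := by
  simp [lift3]

/-- The coassociativity workhorse: reassociate nested Sweedler sums. -/
lemma sum3_coassoc {B : Type*} [AddCommGroup B] [Module k B]
    (T : A →ₗ[k] A →ₗ[k] A →ₗ[k] B) {ι κ Λ : Type*} {a : A} (r : Coalgebra.Repr k a ι)
    (rl : ∀ i : r.ι, Coalgebra.Repr k (r.left i) κ)
    (rr : ∀ i : r.ι, Coalgebra.Repr k (r.right i) Λ) :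
    ∑ i ∈ r.index, ∑ j ∈ (rl i).index, T ((rl i).left j) ((rl i).right j) (r.right i)
      = ∑ i ∈ r.index, ∑ j ∈ (rr i).index, T (r.left i) ((rr i).left j) ((rr i).right j) := by
  have h := Coalgebra.sum_tmul_tmul_eq (R := k) r rl rr
  have h2 := congrArg (lift3 T) h
  simpa [map_sum] using h2

@[simp] lemma antipode_one' : S (1 : A) = 1 := by
  have h := HopfAlgebra.mul_antipode_rTensor_comul_apply (R := k) (A := A) 1
  simpa [Bialgebra.comul_one, Algebra.TensorProduct.one_def] using h

lemma counit_antipode (a : A) : ε (S a) = ε a := by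
  let r := ℛ k a
  have h1 : ∑ i ∈ r.index, S (r.left i) * r.right i = ε a • 1 :=
    HopfAlgebra.sum_antipode_mul_eq_smul r
  have h2 := congrArg ε h1
  simp only [map_sum, Bialgebra.counit_mul, map_smul, Bialgebra.counit_one,
    smul_eq_mul, mul_one] at h2
  calc ε (S a) = ε (S (∑ i ∈ r.index, ε (r.right i) • r.left i)) := by
        rw [counit_right_collapse]
      _ = ∑ i ∈ r.index, ε (r.right i) * ε (S (r.left i)) := by
        simp [map_sum, map_smul, smul_eq_mul]
      _ = ∑ i ∈ r.index, ε (S (r.left i)) * ε (r.right i) :=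
        Finset.sum_congr rfl fun i _ => mul_comm _ _
      _ = ε a := h2



/-- Convolution identity for a product: `∑ S(x₁y₁) (x₂y₂) = ε(xy) 1`. -/
lemma sum_antipode_mul_mul {ι κ : Type*} {x y : A} (rx : Coalgebra.Repr k x ι) (ry : Coalgebra.Repr k y κ) :
    ∑ p ∈ rx.index, ∑ l ∈ ry.index, S (rx.left p * ry.left l) * (rx.right p * ry.right l)
      = ε (x * y) • (1 : A) := by
  have hc : Coalgebra.comul (R := k) (x * y)
      = ∑ p ∈ rx.index, ∑ l ∈ ry.index,
          (rx.left p * ry.left l) ⊗ₜ[k] (rx.right p * ry.right l) := by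
    rw [Bialgebra.comul_mul, ← rx.eq, ← ry.eq, Finset.sum_mul_sum]
    exact Finset.sum_congr rfl fun p _ => Finset.sum_congr rfl fun l _ => by
      rw [Algebra.TensorProduct.tmul_mul_tmul]
  have h := HopfAlgebra.mul_antipode_rTensor_comul_apply (R := k) (x * y)
  rw [hc] at h
  simp only [map_sum, LinearMap.rTensor_tmul, LinearMap.mul'_apply] at h
  rw [h, Algebra.algebraMap_eq_smul_one]

theorem antipode_mul (a b : A) : S (a * b) = S b * S a := by
  classical
  have ra : Coalgebra.Repr k a (A × A) := ℛ k a
  have rb : Coalgebra.Repr k b (A × A) := ℛ k b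
  have rp : ∀ i : ra.ι, Coalgebra.Repr k (ra.left i) (A × A) := fun i => ℛ k (ra.left i)
  have rq : ∀ i : ra.ι, Coalgebra.Repr k (ra.right i) (A × A) := fun i => ℛ k (ra.right i)
  have ru : ∀ j : rb.ι, Coalgebra.Repr k (rb.left j) (A × A) := fun j => ℛ k (rb.left j)
  have rv : ∀ j : rb.ι, Coalgebra.Repr k (rb.right j) (A × A) := fun j => ℛ k (rb.right j)
  -- Step 1 : expand `a` and `b` by counit collapses
  have step1 : S (a * b) = ∑ i ∈ ra.index, ∑ j ∈ rb.index,
      S (ra.left i * rb.left j) * ((ε (ra.right i) * ε (rb.right j)) • (1 : A)) := by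
    conv_lhs => rw [← counit_right_collapse ra, ← counit_right_collapse rb]
    rw [Finset.sum_mul_sum, map_sum]
    refine Finset.sum_congr rfl fun i _ => ?_
    rw [map_sum]
    refine Finset.sum_congr rfl fun j _ => ?_
    simp [smul_mul_assoc, mul_smul_comm, smul_smul, mul_one, mul_comm]
  -- Step 2 : insertion of the antipode identity
  have step2 : ∀ i : ra.ι, ∀ j : rb.ι,
      (ε (ra.right i) * ε (rb.right j)) • (1 : A)
      = ∑ p ∈ (rq i).index, ∑ l ∈ (rv j).index,
          ((rq i).left p * (rv j).left l) * (S ((rv j).right l) * S ((rq i).right p)) := by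
    intro i j
    have hv : ∑ l ∈ (rv j).index, (rv j).left l * S ((rv j).right l)
        = ε (rb.right j) • (1 : A) := HopfAlgebra.sum_mul_antipode_eq_smul (rv j)
    have hq : ∑ p ∈ (rq i).index, (rq i).left p * S ((rq i).right p)
        = ε (ra.right i) • (1 : A) := HopfAlgebra.sum_mul_antipode_eq_smul (rq i)
    have inner : ∀ p, ∑ l ∈ (rv j).index,
        ((rq i).left p * (rv j).left l) * (S ((rv j).right l) * S ((rq i).right p))
        = ε (rb.right j) • ((rq i).left p * S ((rq i).right p)) := by
      intro p
      calc ∑ l ∈ (rv j).index,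
            ((rq i).left p * (rv j).left l) * (S ((rv j).right l) * S ((rq i).right p))
          = (rq i).left p * ((∑ l ∈ (rv j).index, (rv j).left l * S ((rv j).right l))
              * S ((rq i).right p)) := by
            rw [Finset.sum_mul, Finset.mul_sum]
            exact Finset.sum_congr rfl fun l _ => by noncomm_ring
        _ = ε (rb.right j) • ((rq i).left p * S ((rq i).right p)) := by
            rw [hv]; simp [smul_mul_assoc, mul_smul_comm]
    rw [Finset.sum_congr rfl fun p _ => inner p, ← Finset.smul_sum, hq, smul_smul,
      mul_comm (ε (rb.right j))]
  -- Step 3 : substitute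
  have step3 : S (a * b) = ∑ i ∈ ra.index, ∑ j ∈ rb.index, ∑ p ∈ (rq i).index,
      ∑ l ∈ (rv j).index, S (ra.left i * rb.left j) *
        (((rq i).left p * (rv j).left l) * (S ((rv j).right l) * S ((rq i).right p))) := by
    rw [step1]
    refine Finset.sum_congr rfl fun i _ => Finset.sum_congr rfl fun j _ => ?_
    rw [step2 i j, Finset.mul_sum]
    exact Finset.sum_congr rfl fun p _ => by rw [Finset.mul_sum]
  -- Step 4 : swap the j,p sums
  have step4 : S (a * b) = ∑ i ∈ ra.index, ∑ p ∈ (rq i).index, ∑ j ∈ rb.index,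
      ∑ l ∈ (rv j).index, S (ra.left i * rb.left j) *
        (((rq i).left p * (rv j).left l) * (S ((rv j).right l) * S ((rq i).right p))) := by
    rw [step3]
    exact Finset.sum_congr rfl fun i _ => Finset.sum_comm
  -- Step 5 : coassociativity on `a`
  have hco1 := sum3_coassoc (mk₃
      (fun α β γ => ∑ j ∈ rb.index, ∑ l ∈ (rv j).index,
        S (α * rb.left j) * ((β * (rv j).left l) * (S ((rv j).right l) * S γ)))
      (by intros; simp [add_mul, mul_add, map_add, Finset.sum_add_distrib])
      (by intros; simp [smul_mul_assoc, mul_smul_comm, map_smul, Finset.smul_sum])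
      (by intros; simp [add_mul, mul_add, map_add, Finset.sum_add_distrib])
      (by intros; simp [smul_mul_assoc, mul_smul_comm, map_smul, Finset.smul_sum])
      (by intros; simp [add_mul, mul_add, map_add, Finset.sum_add_distrib])
      (by intros; simp [smul_mul_assoc, mul_smul_comm, map_smul, Finset.smul_sum]))
      ra rp rq
  simp only [mk₃_apply] at hco1
  rw [← hco1] at step4
  -- step4 : S (a*b) = ∑ i ∑ p ∈ (rp i) ∑ j ∑ l, S(p¹ * uⱼ) * ((p² * v¹) * (S v² * S qᵢ))
  -- Step 6 : reorder sums to bring j, l outside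
  have step6 : S (a * b) = ∑ j ∈ rb.index, ∑ l ∈ (rv j).index, ∑ i ∈ ra.index,
      ∑ p ∈ (rp i).index, S ((rp i).left p * rb.left j) *
        (((rp i).right p * (rv j).left l) * (S ((rv j).right l) * S (ra.right i))) := by
    rw [step4]
    rw [show (∑ i ∈ ra.index, ∑ p ∈ (rp i).index, ∑ j ∈ rb.index, ∑ l ∈ (rv j).index,
          S ((rp i).left p * rb.left j) *
          (((rp i).right p * (rv j).left l) * (S ((rv j).right l) * S (ra.right i))))
        = ∑ i ∈ ra.index, ∑ j ∈ rb.index, ∑ p ∈ (rp i).index, ∑ l ∈ (rv j).index,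
          S ((rp i).left p * rb.left j) *
          (((rp i).right p * (rv j).left l) * (S ((rv j).right l) * S (ra.right i)))
      from Finset.sum_congr rfl fun i _ => Finset.sum_comm]
    rw [Finset.sum_comm]
    refine Finset.sum_congr rfl fun j _ => ?_
    rw [show (∑ i ∈ ra.index, ∑ p ∈ (rp i).index, ∑ l ∈ (rv j).index,
          S ((rp i).left p * rb.left j) *
          (((rp i).right p * (rv j).left l) * (S ((rv j).right l) * S (ra.right i))))
        = ∑ i ∈ ra.index, ∑ l ∈ (rv j).index, ∑ p ∈ (rp i).index,
          S ((rp i).left p * rb.left j) *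
          (((rp i).right p * (rv j).left l) * (S ((rv j).right l) * S (ra.right i)))
      from Finset.sum_congr rfl fun i _ => Finset.sum_comm]
    exact Finset.sum_comm
  -- Step 7 : coassociativity on `b`
  have hco2 := sum3_coassoc (mk₃
      (fun α β γ => ∑ i ∈ ra.index, ∑ p ∈ (rp i).index,
        S ((rp i).left p * α) * (((rp i).right p * β) * (S γ * S (ra.right i))))
      (by intros; simp [add_mul, mul_add, map_add, Finset.sum_add_distrib])
      (by intros; simp [smul_mul_assoc, mul_smul_comm, map_smul, Finset.smul_sum])
      (by intros; simp [add_mul, mul_add, map_add, Finset.sum_add_distrib])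
      (by intros; simp [smul_mul_assoc, mul_smul_comm, map_smul, Finset.smul_sum])
      (by intros; simp [add_mul, mul_add, map_add, Finset.sum_add_distrib])
      (by intros; simp [smul_mul_assoc, mul_smul_comm, map_smul, Finset.smul_sum]))
      rb ru rv
  simp only [mk₃_apply] at hco2
  rw [← hco2] at step6
  -- step6 : S(ab) = ∑ j ∑ l ∈ (ru j) ∑ i ∑ p, S(p¹ u¹) * ((p² u²) * (S(rb.right j) * S(ra.right i)))
  -- Step 8 : reorder and collapse the inner double sum
  have step8 : S (a * b) = ∑ j ∈ rb.index, ∑ i ∈ ra.index,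
      (ε (ra.left i) * ε (rb.left j)) • (S (rb.right j) * S (ra.right i)) := by
    rw [step6, Finset.sum_congr rfl fun j _ => (Finset.sum_comm (s := (ru j).index)
      (t := ra.index) (f := fun l i => ∑ p ∈ (rp i).index,
        S ((rp i).left p * (ru j).left l) *
        (((rp i).right p * (ru j).right l) * (S (rb.right j) * S (ra.right i)))))]
    refine Finset.sum_congr rfl fun j _ => Finset.sum_congr rfl fun i _ => ?_
    rw [Finset.sum_comm]
    have collapse := sum_antipode_mul_mul (rp i) (ru j)
    calc ∑ p ∈ (rp i).index, ∑ l ∈ (ru j).index,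
          S ((rp i).left p * (ru j).left l) *
          (((rp i).right p * (ru j).right l) * (S (rb.right j) * S (ra.right i)))
        = (∑ p ∈ (rp i).index, ∑ l ∈ (ru j).index,
            S ((rp i).left p * (ru j).left l) * ((rp i).right p * (ru j).right l)) *
            (S (rb.right j) * S (ra.right i)) := by
          rw [Finset.sum_mul]
          refine Finset.sum_congr rfl fun p _ => ?_
          rw [Finset.sum_mul]
          exact Finset.sum_congr rfl fun l _ => by simp only [mul_assoc]
      _ = (ε (ra.left i * rb.left j) • (1 : A)) * (S (rb.right j) * S (ra.right i)) := by
          rw [collapse]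
      _ = (ε (ra.left i) * ε (rb.left j)) • (S (rb.right j) * S (ra.right i)) := by
          rw [Bialgebra.counit_mul]; simp [smul_mul_assoc]
  -- Step 9 : final collapse
  rw [step8]
  calc ∑ j ∈ rb.index, ∑ i ∈ ra.index,
        (ε (ra.left i) * ε (rb.left j)) • (S (rb.right j) * S (ra.right i))
      = ∑ j ∈ rb.index, ε (rb.left j) • (S (rb.right j) *
          S (∑ i ∈ ra.index, ε (ra.left i) • ra.right i)) := by
        refine Finset.sum_congr rfl fun j _ => ?_
        rw [map_sum, Finset.mul_sum, Finset.smul_sum]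
        refine Finset.sum_congr rfl fun i _ => ?_
        rw [map_smul, mul_smul_comm, smul_smul, mul_comm (ε (rb.left j))]
    _ = (∑ j ∈ rb.index, ε (rb.left j) • S (rb.right j)) * S a := by
        rw [counit_left_collapse ra, Finset.sum_mul]
        exact Finset.sum_congr rfl fun j _ => by rw [smul_mul_assoc]
    _ = S b * S a := by
        congr 1
        rw [show (∑ j ∈ rb.index, ε (rb.left j) • S (rb.right j))
            = S (∑ j ∈ rb.index, ε (rb.left j) • rb.right j) from by
          rw [map_sum]; exact Finset.sum_congr rfl fun j _ => (map_smul _ _ _).symm,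
          counit_left_collapse rb]




end BurciuAux
end HopfAux
noncomputable section RMat
namespace BurciuAux
open TensorProduct LinearMap Finset Burciu

variable {k : Type*} [Field k] {A : Type*} [Ring A] [HopfAlgebra k A]

local notation "S" => (HopfAlgebra.antipode (R := k) (A := A))
local notation "ε" => (Coalgebra.counit (R := k) (A := A))

/-- `c ⊗ d ↦ S(d) * c`. -/
def sflip : A ⊗[k] A →ₗ[k] A :=
  TensorProduct.lift (LinearMap.mk₂ k (fun c d => S d * c)
    (fun x y d => by simp [mul_add])
    (fun c x d => by simp [mul_smul_comm])
    (fun x d e => by simp [map_add, add_mul])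
    (fun c x d => by simp [map_smul, smul_mul_assoc]))

@[simp] lemma sflip_tmul (c d : A) : sflip (c ⊗ₜ[k] d) = S d * c := rfl

variable {R : A ⊗[k] A}

/-- The identity `∑ S(x₂) u x₁ = ε(x) u` for the Drinfeld element `u`. -/
lemma star_id (hR : IsRMatrix k A R) {s : Finset (A × A)}
    (hs : R = ∑ p ∈ s, p.1 ⊗ₜ[k] p.2) {ι : Type*} {x : A} (r : Coalgebra.Repr k x ι) :
    ∑ i ∈ r.index, S (r.right i) * (∑ p ∈ s, S p.2 * p.1) * r.left i
      = ε x • (∑ p ∈ s, S p.2 * p.1) := by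
  have hq := hR.quasi x
  rw [hs, ← r.eq] at hq
  have hq2 := congrArg sflip hq
  simp only [Finset.sum_mul, Finset.mul_sum, map_sum, Algebra.TensorProduct.tmul_mul_tmul,
    TensorProduct.comm_tmul, sflip_tmul] at hq2
  calc ∑ i ∈ r.index, S (r.right i) * (∑ p ∈ s, S p.2 * p.1) * r.left i
      = ∑ i ∈ r.index, ∑ p ∈ s, S (p.2 * r.right i) * (p.1 * r.left i) := by
        refine Finset.sum_congr rfl fun i _ => ?_
        rw [Finset.mul_sum, Finset.sum_mul]
        refine Finset.sum_congr rfl fun p _ => ?_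
        rw [antipode_mul]
        simp only [mul_assoc]
    _ = ε x • (∑ p ∈ s, S p.2 * p.1) := by
        rw [hq2]
        have hx : ∑ i ∈ r.index, S (r.left i) * r.right i = ε x • (1 : A) :=
          HopfAlgebra.sum_antipode_mul_eq_smul r
        rw [Finset.smul_sum]
        refine Finset.sum_congr rfl fun p _ => ?_
        calc ∑ i ∈ r.index, S (r.left i * p.2) * (r.right i * p.1)
            = S p.2 * (∑ i ∈ r.index, S (r.left i) * r.right i) * p.1 := by
              rw [Finset.mul_sum, Finset.sum_mul]
              refine Finset.sum_congr rfl fun i _ => ?_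
              rw [antipode_mul]
              simp only [mul_assoc]
          _ = ε x • (S p.2 * p.1) := by
              rw [hx]
              simp [smul_mul_assoc, mul_smul_comm]

/-- The key identity `u x = S²(x) u`. -/
lemma key_id (hR : IsRMatrix k A R) {s : Finset (A × A)}
    (hs : R = ∑ p ∈ s, p.1 ⊗ₜ[k] p.2) (x : A) :
    (∑ p ∈ s, S p.2 * p.1) * x = S (S x) * (∑ p ∈ s, S p.2 * p.1) := by
  have r : Coalgebra.Repr k x (A × A) := ℛ k x
  have rl : ∀ i : r.ι, Coalgebra.Repr k (r.left i) (A × A) := fun i => ℛ k (r.left i)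
  have rr : ∀ i : r.ι, Coalgebra.Repr k (r.right i) (A × A) := fun i => ℛ k (r.right i)
  have hco := sum3_coassoc (mk₃ (fun α β γ => S (β * S γ) * (∑ p ∈ s, S p.2 * p.1) * α)
      (by intros; simp [mul_add, add_mul])
      (by intros; simp [mul_smul_comm, smul_mul_assoc])
      (by intros; simp [add_mul, map_add, mul_add])
      (by intros; simp [map_smul, smul_mul_assoc])
      (by intros; simp [map_add, mul_add, add_mul])
      (by intros; simp [map_smul, mul_smul_comm, smul_mul_assoc])) r rl rr
  simp only [mk₃_apply] at hco
  calc (∑ p ∈ s, S p.2 * p.1) * x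
      = (∑ p ∈ s, S p.2 * p.1) * (∑ i ∈ r.index, ε (r.right i) • r.left i) := by
        rw [counit_right_collapse]
    _ = ∑ i ∈ r.index, ε (r.right i) • ((∑ p ∈ s, S p.2 * p.1) * r.left i) := by
        rw [Finset.mul_sum]
        exact Finset.sum_congr rfl fun i _ => by rw [mul_smul_comm]
    _ = ∑ i ∈ r.index, ∑ j ∈ (rr i).index,
          S ((rr i).left j * S ((rr i).right j)) * (∑ p ∈ s, S p.2 * p.1) * r.left i := by
        refine Finset.sum_congr rfl fun i _ => ?_
        have hcoll : ∑ j ∈ (rr i).index, (rr i).left j * S ((rr i).right j)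
            = ε (r.right i) • (1 : A) := HopfAlgebra.sum_mul_antipode_eq_smul (rr i)
        rw [show (∑ j ∈ (rr i).index,
              S ((rr i).left j * S ((rr i).right j)) * (∑ p ∈ s, S p.2 * p.1) * r.left i)
            = S (∑ j ∈ (rr i).index, (rr i).left j * S ((rr i).right j)) *
                (∑ p ∈ s, S p.2 * p.1) * r.left i from by
          rw [map_sum, Finset.sum_mul, Finset.sum_mul], hcoll]
        simp [map_smul, smul_mul_assoc]
    _ = ∑ i ∈ r.index, ∑ j ∈ (rl i).index,
          S ((rl i).right j * S (r.right i)) * (∑ p ∈ s, S p.2 * p.1) * (rl i).left j :=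
        hco.symm
    _ = ∑ i ∈ r.index, S (S (r.right i)) * (∑ j ∈ (rl i).index,
          S ((rl i).right j) * (∑ p ∈ s, S p.2 * p.1) * (rl i).left j) := by
        refine Finset.sum_congr rfl fun i _ => ?_
        rw [Finset.mul_sum]
        refine Finset.sum_congr rfl fun j _ => ?_
        rw [antipode_mul]
        simp only [mul_assoc]
    _ = ∑ i ∈ r.index, S (S (r.right i)) * (ε (r.left i) • (∑ p ∈ s, S p.2 * p.1)) := by
        refine Finset.sum_congr rfl fun i _ => ?_
        rw [star_id hR hs (rl i)]
    _ = S (S x) * (∑ p ∈ s, S p.2 * p.1) := by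
        rw [show (∑ i ∈ r.index, S (S (r.right i)) * (ε (r.left i) • (∑ p ∈ s, S p.2 * p.1)))
          = S (S (∑ i ∈ r.index, ε (r.left i) • r.right i)) * (∑ p ∈ s, S p.2 * p.1) from by
            rw [map_sum, map_sum, Finset.sum_mul]
            exact Finset.sum_congr rfl fun i _ => by
              rw [map_smul, map_smul, mul_smul_comm, smul_mul_assoc]]
        rw [counit_left_collapse]

/-- `v u = 1` for `v = ∑ b S²(a)`. -/
lemma vu_one (hR : IsRMatrix k A R) {s : Finset (A × A)}
    (hs : R = ∑ p ∈ s, p.1 ⊗ₜ[k] p.2) :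
    (∑ p ∈ s, p.2 * S (S p.1)) * (∑ q ∈ s, S q.2 * q.1) = 1 := by
  have step1 : (∑ p ∈ s, p.2 * S (S p.1)) * (∑ q ∈ s, S q.2 * q.1)
      = ∑ p ∈ s, ∑ q ∈ s, p.2 * (S q.2 * (q.1 * p.1)) := by
    rw [Finset.sum_mul]
    refine Finset.sum_congr rfl fun p _ => ?_
    rw [mul_assoc, ← key_id hR hs p.1, Finset.sum_mul, Finset.mul_sum]
    refine Finset.sum_congr rfl fun q _ => ?_
    simp only [mul_assoc]
  rw [step1]
  -- use the comul_right axiom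
  have hax := hR.comul_right
  rw [hs] at hax
  simp only [map_sum, LinearMap.lTensor_tmul, TensorProduct.mk_apply,
    LinearMap.flip_apply, Finset.sum_mul, Finset.mul_sum,
    Algebra.TensorProduct.tmul_mul_tmul, one_mul, mul_one] at hax
  -- hax : ∑ p, p.1 ⊗ comul p.2 = ∑ q ∑ p, (q.1 * p.1) ⊗ (p.2 ⊗ q.2)
  have hax2 := congrArg (lift3 (mk₃ (fun α β γ => β * (S γ * α))
      (by intros; simp [mul_add, add_mul])
      (by intros; simp [mul_smul_comm, smul_mul_assoc])
      (by intros; simp [add_mul, mul_add])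
      (by intros; simp [smul_mul_assoc])
      (by intros; simp [map_add, mul_add, add_mul])
      (by intros; simp [map_smul, mul_smul_comm, smul_mul_assoc]))) hax
  simp only [map_sum, lift3_tmul, mk₃_apply] at hax2
  rw [← hax2]
  -- now compute the left side : ∑ p, lift3 T (p.1 ⊗ comul p.2) = 1
  have hcr := hR.counit_right
  rw [hs] at hcr
  simp only [map_sum, LinearMap.lTensor_tmul, TensorProduct.rid_tmul] at hcr
  -- hcr : ∑ p, ε p.2 • p.1 = 1
  rw [← hcr]
  refine Finset.sum_congr rfl fun p _ => ?_
  have rp : Coalgebra.Repr k p.2 (A × A) := ℛ k p.2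
  rw [show ((p.1 : A) ⊗ₜ[k] (Coalgebra.comul (R := k) p.2))
      = ∑ j ∈ rp.index, p.1 ⊗ₜ[k] (rp.left j ⊗ₜ[k] rp.right j) from by
    rw [← rp.eq, TensorProduct.tmul_sum]]
  rw [map_sum]
  simp only [lift3_tmul, mk₃_apply]
  have : ∑ j ∈ rp.index, rp.left j * (S (rp.right j) * p.1)
      = (∑ j ∈ rp.index, rp.left j * S (rp.right j)) * p.1 := by
    rw [Finset.sum_mul]
    exact Finset.sum_congr rfl fun j _ => by rw [mul_assoc]
  rw [this, HopfAlgebra.sum_mul_antipode_eq_smul rp, smul_mul_assoc, one_mul]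

/-- The antipode of a quasitriangular Hopf algebra is injective. -/
lemma antipode_injective (hR : IsRMatrix k A R) {x : A} (hx : S x = 0) : x = 0 := by
  obtain ⟨s, hs⟩ := TensorProduct.exists_finset (R := k) R
  have h1 : (∑ q ∈ s, S q.2 * q.1) * x = 0 := by
    rw [key_id hR hs x, hx, map_zero, zero_mul]
  calc x = 1 * x := (one_mul x).symm
    _ = ((∑ p ∈ s, p.2 * S (S p.1)) * (∑ q ∈ s, S q.2 * q.1)) * x := by rw [vu_one hR hs]
    _ = (∑ p ∈ s, p.2 * S (S p.1)) * ((∑ q ∈ s, S q.2 * q.1) * x) := by rw [mul_assoc]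
    _ = 0 := by rw [h1, mul_zero]

end BurciuAux
end RMat
noncomputable section CoidealSec
namespace BurciuAux
open TensorProduct LinearMap Finset Burciu

variable {k : Type*} [Field k] {A : Type*} [Ring A] [HopfAlgebra k A]

local notation "S" => (HopfAlgebra.antipode (R := k) (A := A))
local notation "ε" => (Coalgebra.counit (R := k) (A := A))

lemma adL_repr {ι : Type*} (x l : A) (r : Coalgebra.Repr k x ι) :
    Burciu.adL k A (x ⊗ₜ[k] l) = ∑ i ∈ r.index, r.left i * (l * S (r.right i)) := by
  simp only [Burciu.adL, LinearMap.coe_comp, Function.comp_apply, LinearMap.rTensor_tmul]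
  rw [← r.eq]
  simp only [TensorProduct.sum_tmul, map_sum, LinearEquiv.coe_coe, TensorProduct.assoc_tmul,
    LinearMap.lTensor_tmul, TensorProduct.comm_tmul, LinearMap.mul'_apply]

lemma counit_adL (x l : A) : ε (Burciu.adL k A (x ⊗ₜ[k] l)) = ε x * ε l := by
  have r : Coalgebra.Repr k x (A × A) := ℛ k x
  rw [adL_repr x l r]
  have hx : ε (∑ i ∈ r.index, ε (r.right i) • r.left i) = ε x := by
    rw [counit_right_collapse]
  simp only [map_sum, map_smul, smul_eq_mul] at hx
  rw [map_sum]
  calc ∑ i ∈ r.index, ε (r.left i * (l * S (r.right i)))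
      = ∑ i ∈ r.index, (ε (r.right i) * ε (r.left i)) * ε l := by
        refine Finset.sum_congr rfl fun i _ => ?_
        rw [Bialgebra.counit_mul, Bialgebra.counit_mul, counit_antipode]
        ring
    _ = ε x * ε l := by rw [← Finset.sum_mul, hx]

/-- The key normality consequence: `a y = ∑ adL(a₁ ⊗ y) a₂`. -/
lemma mul_eq_sum_adL {ι κ : Type*} (a y : A) (ra : Coalgebra.Repr k a ι)
    (rl : ∀ i : ra.ι, Coalgebra.Repr k (ra.left i) κ) :
    a * y = ∑ i ∈ ra.index,
      (∑ j ∈ (rl i).index, (rl i).left j * (y * S ((rl i).right j))) * ra.right i := by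
  have rr : ∀ i : ra.ι, Coalgebra.Repr k (ra.right i) (A × A) := fun i => ℛ k (ra.right i)
  have hco := sum3_coassoc (mk₃ (fun α β γ => (α * (y * S β)) * γ)
      (by intros; simp [add_mul])
      (by intros; simp [smul_mul_assoc])
      (by intros; simp [map_add, mul_add, add_mul])
      (by intros; simp [map_smul, mul_smul_comm, smul_mul_assoc])
      (by intros; simp [mul_add])
      (by intros; simp [mul_smul_comm])) ra rl rr
  simp only [mk₃_apply] at hco
  calc a * y = (∑ i ∈ ra.index, ε (ra.right i) • ra.left i) * y := by
        rw [counit_right_collapse]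
    _ = ∑ i ∈ ra.index, ∑ j ∈ (rr i).index,
          (ra.left i * (y * S ((rr i).left j))) * (rr i).right j := by
        rw [Finset.sum_mul]
        refine Finset.sum_congr rfl fun i _ => ?_
        have hcoll : ∑ j ∈ (rr i).index, S ((rr i).left j) * (rr i).right j
            = ε (ra.right i) • (1 : A) := HopfAlgebra.sum_antipode_mul_eq_smul (rr i)
        calc (ε (ra.right i) • ra.left i) * y
            = ra.left i * (y * (ε (ra.right i) • (1:A))) := by
              simp [smul_mul_assoc, mul_smul_comm]
          _ = ra.left i * (y * (∑ j ∈ (rr i).index, S ((rr i).left j) * (rr i).right j)) := by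
              rw [hcoll]
          _ = ∑ j ∈ (rr i).index,
                (ra.left i * (y * S ((rr i).left j))) * (rr i).right j := by
              rw [Finset.mul_sum, Finset.mul_sum]
              refine Finset.sum_congr rfl fun j _ => ?_
              simp only [mul_assoc]
    _ = ∑ i ∈ ra.index, ∑ j ∈ (rl i).index,
          ((rl i).left j * (y * S ((rl i).right j))) * ra.right i := hco.symm
    _ = ∑ i ∈ ra.index,
          (∑ j ∈ (rl i).index, (rl i).left j * (y * S ((rl i).right j))) * ra.right i := by
        refine Finset.sum_congr rfl fun i _ => ?_
        rw [Finset.sum_mul]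

variable {L : Subalgebra k A}

/-- `A L⁺ ⊆ L⁺ A` for a normal left coideal subalgebra. -/
lemma ALplus_le_LplusA (hL : IsLNCS L) :
    ALplus k A L ≤ (Subalgebra.toSubmodule L ⊓ LinearMap.ker ε) * (⊤ : Submodule k A) := by
  rw [Burciu.ALplus]
  refine Submodule.mul_le.2 fun a _ y hy => ?_
  have ra : Coalgebra.Repr k a (A × A) := ℛ k a
  have rl : ∀ i : ra.ι, Coalgebra.Repr k (ra.left i) (A × A) := fun i => ℛ k (ra.left i)
  rw [mul_eq_sum_adL a y ra rl]
  refine Submodule.sum_mem _ fun i _ => ?_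
  rw [← adL_repr (ra.left i) y (rl i)]
  refine Submodule.mul_mem_mul ?_ Submodule.mem_top
  refine Submodule.mem_inf.2 ⟨?_, ?_⟩
  · exact hL.2 (ra.left i) y hy.1
  · rw [LinearMap.mem_ker, counit_adL]
    have : ε y = 0 := hy.2
    rw [this, mul_zero]

/-- For a left coideal subalgebra, `S(L⁺) ⊆ A L⁺`. -/
lemma antipode_Lplus_mem (hL1 : IsLeftCoideal L) {y : A}
    (hy : y ∈ Subalgebra.toSubmodule L ⊓ LinearMap.ker ε) : S y ∈ ALplus k A L := by
  obtain ⟨w, hw⟩ := hL1 y hy.1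
  obtain ⟨t, ht⟩ := TensorProduct.exists_finset (R := k) w
  obtain ⟨r, hmem⟩ : ∃ r : Coalgebra.Repr k y (A × ↥(Subalgebra.toSubmodule L)), ∀ i ∈ r.index, r.right i ∈ L := by
    refine ⟨⟨t, fun p => p.1, fun p => ((p.2 : ↥(Subalgebra.toSubmodule L)) : A), ?_⟩,
      fun i _ => i.2.2⟩
    rw [← hw, ht, map_sum]
    exact Finset.sum_congr rfl fun p _ => rfl
  have h0 : ∑ i ∈ r.index, S (r.left i) * r.right i = 0 := by
    rw [HopfAlgebra.sum_antipode_mul_eq_smul r]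
    have hε : ε y = 0 := hy.2
    rw [hε, zero_smul]
  have hSy : S y = ∑ i ∈ r.index, ε (r.right i) • S (r.left i) := by
    conv_lhs => rw [← counit_right_collapse r]
    rw [map_sum]
    exact Finset.sum_congr rfl fun i _ => by rw [map_smul]
  have hsplit : ∀ i, S (r.left i) * r.right i
      = S (r.left i) * (r.right i - ε (r.right i) • (1:A)) + ε (r.right i) • S (r.left i) := by
    intro i
    rw [mul_sub, mul_smul_comm, mul_one]
    abel
  have key : S y = - ∑ i ∈ r.index, S (r.left i) * (r.right i - ε (r.right i) • (1:A)) := by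
    have h1 : (∑ i ∈ r.index, S (r.left i) * (r.right i - ε (r.right i) • (1:A)))
        + ∑ i ∈ r.index, ε (r.right i) • S (r.left i) = 0 := by
      rw [← Finset.sum_add_distrib]
      rw [show (∑ i ∈ r.index, (S (r.left i) * (r.right i - ε (r.right i) • (1:A))
          + ε (r.right i) • S (r.left i))) = ∑ i ∈ r.index, S (r.left i) * r.right i from
        Finset.sum_congr rfl fun i _ => (hsplit i).symm]
      exact h0
    rw [hSy]
    exact eq_neg_of_add_eq_zero_left (by rw [add_comm]; exact h1)
  rw [key]
  refine Submodule.neg_mem _ (Submodule.sum_mem _ fun i hi => ?_)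
  rw [Burciu.ALplus]
  refine Submodule.mul_mem_mul Submodule.mem_top ?_
  refine Submodule.mem_inf.2 ⟨?_, ?_⟩
  · have h1L : (1 : A) ∈ Subalgebra.toSubmodule L := Subalgebra.one_mem L
    exact Submodule.sub_mem _ (hmem i hi) (Submodule.smul_mem _ _ h1L)
  · rw [LinearMap.mem_ker, map_sub, map_smul, Bialgebra.counit_one, smul_eq_mul, mul_one,
      sub_self]

lemma ALplus_left_mul {c y : A} (hy : y ∈ ALplus k A L) : c * y ∈ ALplus k A L := by
  rw [Burciu.ALplus] at hy ⊢
  refine Submodule.mul_induction_on hy (fun a _ x hx => ?_) (fun u v hu hv => ?_)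
  · rw [← mul_assoc]
    exact Submodule.mul_mem_mul Submodule.mem_top hx
  · rw [mul_add]
    exact Submodule.add_mem _ hu hv

/-- The central structural result: `L⁺ A = A L⁺`. -/
theorem LplusA_eq_ALplus [FiniteDimensional k A] {R : A ⊗[k] A} (hR : IsRMatrix k A R)
    (hL : IsLNCS L) :
    (Subalgebra.toSubmodule L ⊓ LinearMap.ker ε) * (⊤ : Submodule k A) = ALplus k A L := by
  have hinj : Function.Injective (HopfAlgebra.antipode (R := k) (A := A)) := by
    intro x y hxy
    have h0 : S (x - y) = 0 := by rw [map_sub, hxy, sub_self]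
    exact sub_eq_zero.mp (antipode_injective hR h0)
  have hJI : ALplus k A L ≤ (Subalgebra.toSubmodule L ⊓ LinearMap.ker ε) * (⊤ : Submodule k A) :=
    ALplus_le_LplusA hL
  have hmap : ((Subalgebra.toSubmodule L ⊓ LinearMap.ker ε) * (⊤ : Submodule k A)).map
      (HopfAlgebra.antipode (R := k) (A := A)) ≤ ALplus k A L := by
    rw [Submodule.map_le_iff_le_comap]
    refine Submodule.mul_le.2 fun x hx a _ => ?_
    simp only [Submodule.mem_comap]
    rw [show S (x * a) = S a * S x from antipode_mul x a]
    exact ALplus_left_mul (antipode_Lplus_mem hL.1 hx)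
  have h1 : Module.finrank k ((Subalgebra.toSubmodule L ⊓ LinearMap.ker ε) * (⊤ : Submodule k A))
      = Module.finrank k (((Subalgebra.toSubmodule L ⊓ LinearMap.ker ε) * (⊤ : Submodule k A)).map
        (HopfAlgebra.antipode (R := k) (A := A))) :=
    (Submodule.equivMapOfInjective _ hinj _).finrank_eq
  have h2 := Submodule.finrank_mono hmap
  exact (Submodule.eq_of_le_of_finrank_le hJI (by rw [← h1] at h2; exact h2)).symm

end BurciuAux
end CoidealSec
noncomputable section RepSec
namespace BurciuAux
open TensorProduct LinearMap Finset Burciu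

variable {k : Type*} [Field k] {A : Type*} [Ring A] [HopfAlgebra k A]

local notation "ε" => (Coalgebra.counit (R := k) (A := A))

variable {W V : Type*} [AddCommGroup W] [Module k W] [AddCommGroup V] [Module k V]

/-- Matrix coefficient `a ↦ ξ(σ(a) w)`. -/
def coeff (σ : A →ₐ[k] Module.End k W) (ξ : Module.Dual k W) (w : W) :
    Module.Dual k A where
  toFun a := ξ (σ a w)
  map_add' x y := by simp
  map_smul' c x := by simp

@[simp] lemma coeff_apply (σ : A →ₐ[k] Module.End k W) (ξ : Module.Dual k W) (w : W) (a : A) :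
    coeff σ ξ w a = ξ (σ a w) := rfl

lemma contract (σ : A →ₐ[k] Module.End k W) (ρ : A →ₐ[k] Module.End k V)
    (z : A ⊗[k] A) (ξ : Module.Dual k W) (w : W) (v : V) :
    TensorProduct.lid k V (LinearMap.rTensor V ξ
      ((TensorProduct.homTensorHomMap (RingHom.id k) W V W V)
        (TensorProduct.map σ.toLinearMap ρ.toLinearMap z) (w ⊗ₜ[k] v)))
    = ρ (TensorProduct.lid k A (LinearMap.rTensor A (coeff σ ξ w) z)) v := by
  induction z using TensorProduct.induction_on with
  | zero => simp
  | tmul a b =>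
    simp only [TensorProduct.map_tmul, TensorProduct.homTensorHomMap_apply,
      LinearMap.rTensor_tmul, TensorProduct.lid_tmul, AlgHom.toLinearMap_apply,
      coeff_apply, map_smul, LinearMap.smul_apply]
  | add x y hx hy =>
    simp only [map_add, LinearMap.add_apply, hx, hy]

lemma sep [FiniteDimensional k W] (x : W ⊗[k] V)
    (h : ∀ ξ : Module.Dual k W, TensorProduct.lid k V (LinearMap.rTensor V ξ x) = 0) :
    x = 0 := by
  classical
  let b := Module.finBasis k W
  have hΦ : ∀ y : W ⊗[k] V, y = ∑ i, (TensorProduct.mk k W V (b i))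
      (TensorProduct.lid k V (LinearMap.rTensor V (b.coord i) y)) := by
    intro y
    induction y using TensorProduct.induction_on with
    | zero => simp
    | tmul w v =>
      simp only [LinearMap.rTensor_tmul, TensorProduct.lid_tmul, TensorProduct.mk_apply,
        Module.Basis.coord_apply]
      calc w ⊗ₜ[k] v = (∑ i, b.repr w i • b i) ⊗ₜ[k] v := by rw [Module.Basis.sum_repr]
        _ = ∑ i, (b.repr w i • b i) ⊗ₜ[k] v := by rw [TensorProduct.sum_tmul]
        _ = ∑ i, b i ⊗ₜ[k] (b.repr w i • v) := Finset.sum_congr rfl fun i _ => by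
              rw [TensorProduct.smul_tmul]
    | add x y hx hy =>
      simp only [map_add]
      conv_lhs => rw [hx, hy]
      rw [← Finset.sum_add_distrib]
  rw [hΦ x]
  simp only [h, map_zero, Finset.sum_const_zero]

lemma qact_coeff {R : A ⊗[k] A} (σ : A →ₐ[k] Module.End k W) (ρ : A →ₐ[k] Module.End k V)
    (h : QactsTrivially R σ ρ) (ξ : Module.Dual k W) (w : W) :
    ρ (phiR k A R (coeff σ ξ w)) = ξ w • (1 : Module.End k V) := by
  have h' : (TensorProduct.homTensorHomMap (RingHom.id k) W V W V)
      (TensorProduct.map σ.toLinearMap ρ.toLinearMap (Qmat k A R)) = LinearMap.id := h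
  refine LinearMap.ext fun v => ?_
  have hc := contract σ ρ (Qmat k A R) ξ w v
  rw [h'] at hc
  simp only [LinearMap.id_apply, TensorProduct.lid_tmul, LinearMap.rTensor_tmul] at hc
  rw [show phiR k A R (coeff σ ξ w)
    = TensorProduct.lid k A (LinearMap.rTensor A (coeff σ ξ w) (Qmat k A R)) from rfl]
  rw [← hc]
  simp

lemma coeff_qact [FiniteDimensional k W] [FiniteDimensional k V] {R : A ⊗[k] A}
    (σ : A →ₐ[k] Module.End k W) (ρ : A →ₐ[k] Module.End k V)
    (h : ∀ (ξ : Module.Dual k W) (w : W),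
      ρ (phiR k A R (coeff σ ξ w)) = ξ w • (1 : Module.End k V)) :
    QactsTrivially R σ ρ := by
  show _ = _
  refine LinearMap.ext fun t => ?_
  rw [LinearMap.id_apply]
  induction t using TensorProduct.induction_on with
  | zero => simp
  | tmul w v =>
    rw [← sub_eq_zero]
    apply sep
    intro ξ
    rw [map_sub, map_sub, contract σ ρ (Qmat k A R) ξ w v]
    have h2 : ρ (TensorProduct.lid k A (LinearMap.rTensor A (coeff σ ξ w) (Qmat k A R)))
        = ξ w • (1 : Module.End k V) := h ξ w
    rw [h2]
    simp
  | add x y hx hy =>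
    simp only [map_add, hx, hy]

lemma eps_contract (f : Module.Dual k A) (z : A ⊗[k] A) :
    ε (TensorProduct.lid k A (LinearMap.rTensor A f z))
      = f (TensorProduct.rid k A (LinearMap.lTensor A ε z)) := by
  induction z using TensorProduct.induction_on with
  | zero => simp
  | tmul a b => simp [mul_comm]
  | add x y hx hy => simp only [map_add, hx, hy]

lemma rid_counit_Qmat {R : A ⊗[k] A} (hR : IsRMatrix k A R) :
    TensorProduct.rid k A (LinearMap.lTensor A ε (Qmat k A R)) = 1 := by
  have hE : ∀ z : A ⊗[k] A,
      ((Algebra.TensorProduct.rid k k A).toAlgHom.comp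
        (Algebra.TensorProduct.map (AlgHom.id k A) (Bialgebra.counitAlgHom k A))) z
      = TensorProduct.rid k A (LinearMap.lTensor A ε z) := by
    intro z
    induction z using TensorProduct.induction_on with
    | zero => simp
    | tmul a b => simp [Algebra.TensorProduct.map_tmul]
    | add x y hx hy => simp only [map_add, hx, hy]
  have hcomm : ∀ z : A ⊗[k] A,
      ((Algebra.TensorProduct.rid k k A).toAlgHom.comp
        (Algebra.TensorProduct.map (AlgHom.id k A) (Bialgebra.counitAlgHom k A)))
        (TensorProduct.comm k A A z)
      = TensorProduct.lid k A (LinearMap.rTensor A ε z) := by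
    intro z
    induction z using TensorProduct.induction_on with
    | zero => simp
    | tmul a b => simp [Algebra.TensorProduct.map_tmul]
    | add x y hx hy => simp only [map_add, hx, hy]
  rw [← hE, Burciu.Qmat, map_mul, hcomm, hE]
  rw [hR.counit_left, hR.counit_right, one_mul]

lemma counit_phiR {R : A ⊗[k] A} (hR : IsRMatrix k A R) (f : Module.Dual k A) :
    ε (phiR k A R f) = f 1 := by
  rw [show phiR k A R f
    = TensorProduct.lid k A (LinearMap.rTensor A f (Qmat k A R)) from rfl]
  rw [eps_contract, rid_counit_Qmat hR]

end BurciuAux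
end RepSec
noncomputable section ModSec
namespace BurciuAux
open TensorProduct LinearMap Finset Burciu

variable {k : Type*} [Field k] {A : Type*} [Ring A] [HopfAlgebra k A]

local notation "ε" => (Coalgebra.counit (R := k) (A := A))

/-- Left multiplication descends to the quotient by a left-stable submodule. -/
def lmulQ (I : Submodule k A) (hI : ∀ (c : A), ∀ y ∈ I, c * y ∈ I) :
    A →ₐ[k] Module.End k (A ⧸ I) :=
  AlgHom.ofLinearMap
    { toFun := fun a => Submodule.mapQ I I (LinearMap.mulLeft k a)
        (show I ≤ I.comap (LinearMap.mulLeft k a) from fun y hy => hI a y hy)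
      map_add' := fun x y => by
        refine Submodule.linearMap_qext _ ?_
        ext z
        simp [Submodule.mapQ_apply, add_mul]
      map_smul' := fun c x => by
        refine Submodule.linearMap_qext _ ?_
        ext z
        simp [Submodule.mapQ_apply, smul_mul_assoc] }
    (by
      refine Submodule.linearMap_qext _ ?_
      ext z
      simp [Submodule.mapQ_apply])
    (fun x y => by
      refine Submodule.linearMap_qext _ ?_
      ext z
      simp [Submodule.mapQ_apply, Module.End.mul_apply, mul_assoc])

@[simp] lemma lmulQ_apply (I : Submodule k A) (hI : ∀ (c : A), ∀ y ∈ I, c * y ∈ I)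
    (a x : A) :
    lmulQ I hI a (Submodule.Quotient.mk x) = Submodule.Quotient.mk (a * x) := by
  simp [lmulQ, Submodule.mapQ_apply]

/-- Conjugating endomorphisms along a linear equivalence, as an algebra map. -/
def conjAlg {W₁ W₂ : Type*} [AddCommGroup W₁] [Module k W₁] [AddCommGroup W₂] [Module k W₂]
    (e : W₂ ≃ₗ[k] W₁) : Module.End k W₁ →ₐ[k] Module.End k W₂ :=
  AlgHom.ofLinearMap
    { toFun := fun g => e.symm.toLinearMap ∘ₗ g ∘ₗ e.toLinearMap
      map_add' := fun g h => by ext w; simp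
      map_smul' := fun c g => by ext w; simp }
    (by ext w; simp)
    (fun g h => by
      ext w
      simp [Module.End.mul_apply])

@[simp] lemma conjAlg_apply {W₁ W₂ : Type*} [AddCommGroup W₁] [Module k W₁] [AddCommGroup W₂]
    [Module k W₂] (e : W₂ ≃ₗ[k] W₁) (g : Module.End k W₁) (w : W₂) :
    conjAlg e g w = e.symm (g (e w)) := rfl

end BurciuAux
end ModSec
/-- (Theorem 1.1) For a semisimple quasitriangular Hopf algebra
`(A, R)` and a left normal coideal subalgebra `L`, the Müger centralizer of
`Rep(A//L)` in `Rep(A)` is `Rep(A//M)` with `M = φ_R((A//L)*)`: a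
finite-dimensional representation centralizes all of `Rep(A//L)` iff
`φ_R((A//L)*)` acts trivially on it. -/
theorem centralizer_of_repQuot
    {k : Type*} [Field k] [IsAlgClosed k] [CharZero k]
    {A : Type*} [Ring A] [HopfAlgebra k A] [FiniteDimensional k A] [IsSemisimpleRing A]
    (R : A ⊗[k] A) (hR : IsRMatrix k A R)
    (L : Subalgebra k A) (hL : IsLNCS L)
    (V : Type u) [AddCommGroup V] [Module k V] [FiniteDimensional k V]
    (ρ : A →ₐ[k] Module.End k V) :
    (∀ (W : Type u) [AddCommGroup W] [Module k W] [FiniteDimensional k W]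
      (σ : A →ₐ[k] Module.End k W),
      ActsTriviallyOn σ (L : Set A) → QactsTrivially R σ ρ) ↔
    ActsTriviallyOn ρ (phiR k A R '' dualQuot (Subalgebra.toSubmodule L)) := by
  classical
  constructor
  · -- forward direction
    intro h
    rintro y ⟨f, hf, rfl⟩
    -- goal : ρ (φ_R f) = ε (φ_R f) • 1
    show ρ (phiR k A R f) = Coalgebra.counit (R := k) (phiR k A R f) • (1 : Module.End k V)
    rw [BurciuAux.counit_phiR hR f]
    by_cases hV : Subsingleton V
    · exact LinearMap.ext fun v => Subsingleton.elim _ _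
    have : Nontrivial V := not_subsingleton_iff_nontrivial.mp hV
    -- the two-sided ideal I = L⁺A = AL⁺
    set I : Submodule k A :=
      (Subalgebra.toSubmodule L ⊓
        LinearMap.ker (Coalgebra.counit (R := k) (A := A))) * (⊤ : Submodule k A) with hIdef
    have hIJ : I = ALplus k A L := BurciuAux.LplusA_eq_ALplus hR hL
    have hIleft : ∀ (c : A), ∀ y ∈ I, c * y ∈ I := by
      intro c y hy
      rw [hIJ] at hy ⊢
      exact BurciuAux.ALplus_left_mul hy
    have hfI : I ≤ LinearMap.ker f := by
      rw [hIJ, Burciu.ALplus]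
      refine Submodule.mul_le.2 fun a _ y hy => ?_
      rw [LinearMap.mem_ker, hf a y hy.1]
      have h0 : Coalgebra.counit (R := k) y = 0 := hy.2
      rw [h0, zero_mul]
    -- the quotient module, transported into `Type u`
    set σ0 : A →ₐ[k] Module.End k (A ⧸ I) := BurciuAux.lmulQ I hIleft with hσ0
    set n : ℕ := Module.finrank k (A ⧸ I) with hn
    obtain ⟨v0, hv0⟩ := exists_ne (0 : V)
    have hli : LinearIndependent k (fun i : Fin n => (Pi.single i v0 : Fin n → V)) := by
      rw [Fintype.linearIndependent_iff]
      intro c hc j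
      have hj := congrFun hc j
      simp only [Finset.sum_apply, Pi.smul_apply, Pi.single_apply, smul_ite, smul_zero,
        Finset.sum_ite_eq, Finset.mem_univ, if_true, Pi.zero_apply] at hj
      rcases smul_eq_zero.mp hj with h1 | h1
      · exact h1
      · exact absurd h1 hv0
    set Wsub : Submodule k (Fin n → V) :=
      Submodule.span k (Set.range fun i : Fin n => (Pi.single i v0 : Fin n → V)) with hWsub
    have hrank : Module.finrank k ↥Wsub = n := by
      rw [finrank_span_eq_card hli, Fintype.card_fin]
    have e : ↥Wsub ≃ₗ[k] A ⧸ I :=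
      LinearEquiv.ofFinrankEq _ _ (by rw [hrank])
    set σW : A →ₐ[k] Module.End k ↥Wsub := (BurciuAux.conjAlg e).comp σ0 with hσW
    have hσtriv : ActsTriviallyOn σW (L : Set A) := by
      intro l hl
      have h0 : σ0 l = Coalgebra.counit (R := k) l • (1 : Module.End k (A ⧸ I)) := by
        refine Submodule.linearMap_qext _ ?_
        ext z
        simp only [hσ0, LinearMap.coe_comp, Function.comp_apply, Submodule.mkQ_apply,
          BurciuAux.lmulQ_apply, LinearMap.smul_apply, Module.End.one_apply]
        rw [show (l : A) * z = Coalgebra.counit (R := k) l • z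
            + (l - Coalgebra.counit (R := k) l • 1) * z from by
          rw [sub_mul, smul_mul_assoc, one_mul]; abel]
        rw [Submodule.Quotient.mk_add]
        have hmem : (l - Coalgebra.counit (R := k) l • 1) * z ∈ I := by
          refine Submodule.mul_mem_mul (Submodule.mem_inf.2 ⟨?_, ?_⟩) Submodule.mem_top
          · exact Submodule.sub_mem _ hl (Submodule.smul_mem _ _ (Subalgebra.one_mem L))
          · rw [LinearMap.mem_ker, map_sub, map_smul, Bialgebra.counit_one, smul_eq_mul,
              mul_one, sub_self]
        rw [(Submodule.Quotient.mk_eq_zero I).2 hmem, add_zero, Submodule.Quotient.mk_smul]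
      rw [hσW, AlgHom.comp_apply, h0]
      rw [show (Coalgebra.counit (R := k) l • (1 : Module.End k (A ⧸ I)))
          = algebraMap k (Module.End k (A ⧸ I)) (Coalgebra.counit (R := k) l) from by
        rw [Algebra.algebraMap_eq_smul_one]]
      rw [AlgHom.commutes, Algebra.algebraMap_eq_smul_one]
    have hQ := h ↥Wsub σW hσtriv
    have hcoeffs := BurciuAux.qact_coeff σW ρ hQ
    set ξq : (A ⧸ I) →ₗ[k] k := I.liftQ f hfI with hξq
    set w : ↥Wsub := e.symm (Submodule.Quotient.mk 1) with hw
    set ξ : Module.Dual k ↥Wsub := ξq ∘ₗ e.toLinearMap with hξ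
    have hcf : BurciuAux.coeff σW ξ w = f := by
      refine LinearMap.ext fun a => ?_
      simp only [BurciuAux.coeff_apply, hξ, hσW, LinearMap.coe_comp, Function.comp_apply,
        LinearEquiv.coe_coe, AlgHom.comp_apply, BurciuAux.conjAlg_apply, hw,
        LinearEquiv.apply_symm_apply]
      rw [hσ0, BurciuAux.lmulQ_apply, mul_one]
      exact Submodule.liftQ_apply I f a
    have hfin := hcoeffs ξ w
    rw [hcf] at hfin
    rw [hfin]
    congr 1
    simp only [hξ, LinearMap.coe_comp, Function.comp_apply, LinearEquiv.coe_coe, hw,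
      LinearEquiv.apply_symm_apply]
    exact Submodule.liftQ_apply I f 1
  · -- backward direction
    intro h W _ _ _ σ hσ
    refine BurciuAux.coeff_qact σ ρ ?_
    intro ξ w
    have hmem : BurciuAux.coeff σ ξ w ∈ dualQuot (Subalgebra.toSubmodule L) := by
      intro a l hl
      simp only [BurciuAux.coeff_apply, map_mul, Module.End.mul_apply]
      rw [hσ l hl]
      simp only [LinearMap.smul_apply, Module.End.one_apply, map_smul, smul_eq_mul]
    have hres := h (phiR k A R (BurciuAux.coeff σ ξ w)) ⟨BurciuAux.coeff σ ξ w, hmem, rfl⟩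
    rw [hres, BurciuAux.counit_phiR hR]
    simp only [BurciuAux.coeff_apply, map_one, Module.End.one_apply]
end

section
/- Let A be a semisimple Hopf algebra with commutative character ring and L a left normal coideal subalgebra. A character χ ∈ C(A) belongs to C(A//L) (i.e. is a character of an A//L-module) if and only if χ F_j = χ(1) F_j for all j ∈ J_L, where λ_L = Σ_{j∈J_L} F_j is the decomposition of the idempotent integral of (A//L)* into primitive idempotents of C(A). -/
/-!
If `L` acts trivially on `V`, then `χ ∈ (A//L)*`, so `χ λ_L = χ(1) λ_L`; multiplying by
`F_j = λ_L F_j` gives `χ F_j = χ(1) F_j`. Conversely, summing the hypothesis over `J` gives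
`χ λ_L = χ(1) λ_L`. Since `A` is semisimple, the left ideal `A L⁺` is `A f` for an
idempotent `f`. Because `L` is a left coideal and `λ_L` is cocommutative and `L`-invariant,
`λ_L ⇀ -` is `L`-linear on both sides and preserves `A L⁺`, so `e = λ_L ⇀ (1 - f)` is an
idempotent with `L⁺ e = 0` and `1 - e ∈ A L⁺`. Then `l e = ε(l) e` for `l ∈ L`, and
`χ(e) = (χ λ_L)(1 - f) = χ(1)`: in characteristic zero an idempotent operator of full trace
is the identity, so `ρ(e) = 1` and `ρ(l) = ρ(l e) = ε(l)`.
-/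

open scoped TensorProduct
open Coalgebra

open Burciu
open scoped TensorProduct

namespace Burciu

open TensorProduct LinearMap WithConv

variable {k : Type*} [Field k] {A : Type*} [Ring A] [HopfAlgebra k A]

lemma toConv_conv (f g : Module.Dual k A) : toConv (conv k A f g) = toConv f * toConv g := rfl

lemma conv_assoc (f g h : Module.Dual k A) :
    conv k A (conv k A f g) h = conv k A f (conv k A g h) :=
  toConv_injective (mul_assoc (toConv f) (toConv g) (toConv h))

lemma conv_smul_left (c : k) (f g : Module.Dual k A) :
    conv k A (c • f) g = c • conv k A f g :=
  toConv_injective (smul_mul_assoc c (toConv f) (toConv g))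

lemma conv_sum_left {ι : Type*} (s : Finset ι) (f : ι → Module.Dual k A)
    (g : Module.Dual k A) :
    conv k A (∑ i ∈ s, f i) g = ∑ i ∈ s, conv k A (f i) g :=
  toConv_injective (by simp only [toConv_conv, toConv_sum, Finset.sum_mul])

lemma conv_sum_right {ι : Type*} (s : Finset ι) (f : Module.Dual k A)
    (g : ι → Module.Dual k A) :
    conv k A f (∑ i ∈ s, g i) = ∑ i ∈ s, conv k A f (g i) :=
  toConv_injective (by simp only [toConv_conv, toConv_sum, Finset.mul_sum])

lemma conv_sum_of_mem {ι : Type*} {F : ι → Module.Dual k A}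
    (hFidem : ∀ j, conv k A (F j) (F j) = F j)
    (hForth : ∀ i j, i ≠ j → conv k A (F i) (F j) = 0) {s : Finset ι} {j : ι}
    (hj : j ∈ s) :
    conv k A (∑ i ∈ s, F i) (F j) = F j := by
  rw [conv_sum_left, Finset.sum_eq_single_of_mem j hj fun i _ hij => hForth i j hij, hFidem]

lemma isCocom_sum {ι : Type*} (s : Finset ι) {F : ι → Module.Dual k A}
    (hF : ∀ i, IsCocom (F i)) : IsCocom (∑ i ∈ s, F i) := fun a b => by
  simp only [coe_sum, Finset.sum_apply, hF _ a b]

def applyRight (φ : Module.Dual k A) : A ⊗[k] A →ₗ[k] A :=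
  (TensorProduct.rid k A).toLinearMap ∘ₗ lTensor A φ

@[simp] lemma applyRight_tmul (φ : Module.Dual k A) (x y : A) :
    applyRight φ (x ⊗ₜ y) = φ y • x := rfl

lemma applyRight_counit_comul (a : A) :
    applyRight (Coalgebra.counit (R := k)) (comul a) = a := by
  simp [applyRight]

/-- The left hit action `φ ⇀ a = a₁ φ(a₂)`. -/
def leftHit (φ : Module.Dual k A) : A →ₗ[k] A := applyRight φ ∘ₗ comul

lemma leftHit_one {φ : Module.Dual k A} (hφ : φ 1 = 1) : leftHit φ (1 : A) = 1 := by
  simp [leftHit, Algebra.TensorProduct.one_def, hφ]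

lemma apply_leftHit (φ ψ : Module.Dual k A) (a : A) : φ (leftHit ψ a) = conv k A φ ψ a := by
  change φ (applyRight ψ (comul a)) = mul' k k (map φ ψ (comul a))
  induction comul (R := k) a using TensorProduct.induction_on with
  | zero => simp
  | tmul x y => simp [mul_comm]
  | add x y hx hy => simp only [map_add, hx, hy]

section LeftCoideal

variable {L : Subalgebra k A} {φ : Module.Dual k A}

lemma applyRight_mul_lTensor_subtype (hφ : φ ∈ dualQuot (Subalgebra.toSubmodule L))
    (z : A ⊗[k] A) (t : A ⊗[k] Subalgebra.toSubmodule L) :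
    applyRight φ (z * lTensor A (Subalgebra.toSubmodule L).subtype t) =
      applyRight φ z * applyRight (Coalgebra.counit (R := k))
        (lTensor A (Subalgebra.toSubmodule L).subtype t) := by
  induction t using TensorProduct.induction_on with
  | zero => simp
  | add t₁ t₂ h₁ h₂ => simp only [map_add, mul_add, h₁, h₂]
  | tmul u m =>
    induction z using TensorProduct.induction_on with
    | zero => simp
    | add z₁ z₂ h₁ h₂ => simp only [add_mul, map_add, h₁, h₂]
    | tmul x y =>
      simp only [lTensor_tmul, Submodule.subtype_apply, Algebra.TensorProduct.tmul_mul_tmul,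
        applyRight_tmul, hφ y m m.2, smul_mul_smul_comm, mul_comm]

lemma lTensor_subtype_mul_applyRight (hφ : φ ∈ dualQuot (Subalgebra.toSubmodule L))
    (hφc : IsCocom φ) (z : A ⊗[k] A) (t : A ⊗[k] Subalgebra.toSubmodule L) :
    applyRight φ (lTensor A (Subalgebra.toSubmodule L).subtype t * z) =
      applyRight (Coalgebra.counit (R := k))
        (lTensor A (Subalgebra.toSubmodule L).subtype t) * applyRight φ z := by
  induction t using TensorProduct.induction_on with
  | zero => simp
  | add t₁ t₂ h₁ h₂ => simp only [map_add, add_mul, h₁, h₂]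
  | tmul u m =>
    induction z using TensorProduct.induction_on with
    | zero => simp
    | add z₁ z₂ h₁ h₂ => simp only [mul_add, map_add, h₁, h₂]
    | tmul x y =>
      simp only [lTensor_tmul, Submodule.subtype_apply, Algebra.TensorProduct.tmul_mul_tmul,
        applyRight_tmul, hφc (m : A) y, hφ y m m.2, smul_mul_smul_comm, mul_comm]

lemma leftHit_mul_of_right_mem (hL : IsLeftCoideal L)
    (hφ : φ ∈ dualQuot (Subalgebra.toSubmodule L)) (a : A) {m : A} (hm : m ∈ L) :
    leftHit φ (a * m) = leftHit φ a * m := by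
  obtain ⟨t, ht⟩ := hL m hm
  rw [leftHit, comp_apply, Bialgebra.comul_mul, ← ht, applyRight_mul_lTensor_subtype hφ, ht,
    applyRight_counit_comul]
  rfl

lemma leftHit_mul_of_left_mem (hL : IsLeftCoideal L)
    (hφ : φ ∈ dualQuot (Subalgebra.toSubmodule L)) (hφc : IsCocom φ) {m : A} (hm : m ∈ L)
    (a : A) : leftHit φ (m * a) = m * leftHit φ a := by
  obtain ⟨t, ht⟩ := hL m hm
  rw [leftHit, comp_apply, Bialgebra.comul_mul, ← ht, lTensor_subtype_mul_applyRight hφ hφc, ht,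
    applyRight_counit_comul]
  rfl

variable (L) in
/-- The left ideal `A L⁺`. -/
def augIdeal : Ideal A :=
  Ideal.span {m | m ∈ L ∧ Coalgebra.counit (R := k) m = 0}

lemma sub_counit_smul_one_mem_augIdeal {l : A} (hl : l ∈ L) :
    l - Coalgebra.counit (R := k) l • 1 ∈ augIdeal L :=
  Ideal.subset_span ⟨L.sub_mem hl (L.smul_mem L.one_mem _), by simp⟩

lemma apply_eq_zero_of_mem_augIdeal (hφ : φ ∈ dualQuot (Subalgebra.toSubmodule L)) {u : A}
    (hu : u ∈ augIdeal L) : φ u = 0 :=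
  Submodule.closure_induction (map_zero φ)
    (fun x y _ _ hx hy => by rw [map_add, hx, hy, add_zero])
    (fun a m ⟨hmL, hm0⟩ => by rw [smul_eq_mul, hφ a m hmL, hm0, zero_mul]) hu

lemma leftHit_mem_augIdeal (hL : IsLeftCoideal L) (hφ : φ ∈ dualQuot (Subalgebra.toSubmodule L))
    {u : A} (hu : u ∈ augIdeal L) : leftHit φ u ∈ augIdeal L :=
  Submodule.closure_induction (by simp)
    (fun x y _ _ hx hy => by rw [map_add]; exact add_mem hx hy)
    (fun a m hm => by
      rw [smul_eq_mul, leftHit_mul_of_right_mem hL hφ a hm.1]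
      exact Ideal.mul_mem_left _ _ (Ideal.subset_span hm)) hu

theorem exists_isIdempotentElem_leftHit [IsSemisimpleRing A] (hL : IsLeftCoideal L)
    (hφ : φ ∈ dualQuot (Subalgebra.toSubmodule L)) (hφc : IsCocom φ) (hφ1 : φ 1 = 1) :
    ∃ a : A, φ a = 1 ∧ IsIdempotentElem (leftHit φ a) ∧
      ∀ l ∈ L, l * leftHit φ a = Coalgebra.counit (R := k) l • leftHit φ a := by
  obtain ⟨f, hf, hIf⟩ := IsSemisimpleRing.ideal_eq_span_idempotent (augIdeal L)
  have hfI : f ∈ augIdeal L := hIf ▸ Ideal.mem_span_singleton_self f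
  have hmul_f : ∀ u ∈ augIdeal L, u * f = u := fun u hu => by
    rw [hIf] at hu
    obtain ⟨a, rfl⟩ := Ideal.mem_span_singleton'.mp hu
    rw [mul_assoc, hf.eq]
  set e := leftHit φ (1 - f) with he_def
  -- `L⁺ (1 - f) = 0`, and `φ ⇀ -` commutes with left multiplication by `L`.
  have hIe : ∀ u ∈ augIdeal L, u * e = 0 := fun u hu =>
    Submodule.closure_induction (zero_mul e)
      (fun x y _ _ hx hy => by rw [add_mul, hx, hy, add_zero])
      (fun a m hm => by
        rw [smul_eq_mul, mul_assoc, ← leftHit_mul_of_left_mem hL hφ hφc hm.1, mul_sub, mul_one,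
          hmul_f m (Ideal.subset_span hm), sub_self, map_zero, mul_zero]) hu
  refine ⟨1 - f, by rw [map_sub, hφ1, apply_eq_zero_of_mem_augIdeal hφ hfI, sub_zero], ?_,
    fun l hl => ?_⟩
  · have h1e : 1 - e ∈ augIdeal L := by
      rw [he_def, map_sub, leftHit_one hφ1, sub_sub_cancel]
      exact leftHit_mem_augIdeal hL hφ hfI
    have := hIe _ h1e
    rw [sub_mul, one_mul, sub_eq_zero] at this
    exact this.symm
  · have := hIe _ (sub_counit_smul_one_mem_augIdeal hl)
    rwa [sub_mul, smul_mul_assoc, one_mul, sub_eq_zero] at this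

end LeftCoideal

section Representation

variable {V : Type*} [AddCommGroup V] [Module k V] (ρ : A →ₐ[k] Module.End k V)

lemma char_mem_dualQuot {L : Subalgebra k A} (hρ : ActsTriviallyOn ρ (L : Set A)) :
    char ρ ∈ dualQuot (Subalgebra.toSubmodule L) := fun a l hl => by
  simp only [char, coe_comp, Function.comp_apply, AlgHom.toLinearMap_apply, map_mul,
    hρ l hl, mul_smul_comm, mul_one, map_smul, smul_eq_mul]

lemma eq_one_of_isIdempotentElem_of_char_eq [CharZero k] [FiniteDimensional k V] {e : A}
    (he : IsIdempotentElem e) (hχ : char ρ e = char ρ 1) : ρ e = 1 := by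
  have h : IsIdempotentElem (1 - ρ e) := (he.map ρ).one_sub
  refine (sub_eq_zero.mp (h.eq_zero_of_trace_eq_zero ?_)).symm
  rw [map_sub, ← map_one ρ]
  exact sub_eq_zero.mpr hχ.symm

theorem actsTriviallyOn_of_conv_char_eq_smul [IsSemisimpleRing A] [CharZero k]
    [FiniteDimensional k V] {L : Subalgebra k A} (hL : IsLeftCoideal L) {φ : Module.Dual k A}
    (hφ : φ ∈ dualQuot (Subalgebra.toSubmodule L)) (hφc : IsCocom φ) (hφ1 : φ 1 = 1)
    (hχ : conv k A (char ρ) φ = char ρ 1 • φ) : ActsTriviallyOn ρ (L : Set A) := by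
  obtain ⟨a, ha, he, hLe⟩ := exists_isIdempotentElem_leftHit hL hφ hφc hφ1
  have hρe : ρ (leftHit φ a) = 1 := eq_one_of_isIdempotentElem_of_char_eq ρ he <| by
    rw [apply_leftHit, hχ, LinearMap.smul_apply, ha, smul_eq_mul, mul_one]
  intro l hl
  rw [← hρe, ← map_smul, ← hLe l hl, map_mul, hρe, mul_one]

end Representation

end Burciu

theorem char_in_quot_iff_absorbs_idempotents_general
    {k : Type*} [Field k] [CharZero k]
    {A : Type*} [Ring A] [HopfAlgebra k A] [IsSemisimpleRing A]
    (n : ℕ) (F : Fin n → Module.Dual k A)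
    (hFcocom : ∀ j, IsCocom (F j))
    (hFidem : ∀ j, conv k A (F j) (F j) = F j)
    (hForth : ∀ i j, i ≠ j → conv k A (F i) (F j) = 0)
    (L : Subalgebra k A) (hL : IsLNCS L) (J : Finset (Fin n))
    (lamL : Module.Dual k A) (hlam_mem : lamL ∈ dualQuot (Subalgebra.toSubmodule L))
    (hlam_int : ∀ f ∈ dualQuot (Subalgebra.toSubmodule L), conv k A f lamL = f 1 • lamL)
    (hlam1 : lamL 1 = 1) (hlam_decomp : lamL = ∑ j ∈ J, F j)
    {V : Type*} [AddCommGroup V] [Module k V] [FiniteDimensional k V]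
    (ρ : A →ₐ[k] Module.End k V) :
    ActsTriviallyOn ρ (L : Set A) ↔
      ∀ j ∈ J, conv k A (char ρ) (F j) = char ρ 1 • F j := by
  constructor
  · intro hρ j hj
    have hχ := hlam_int _ (char_mem_dualQuot ρ hρ)
    have hlamF : conv k A lamL (F j) = F j := hlam_decomp ▸ conv_sum_of_mem hFidem hForth hj
    rw [← hlamF, ← conv_assoc, hχ, conv_smul_left]
  · intro h
    have hlam_cocom : IsCocom lamL := hlam_decomp ▸ isCocom_sum J hFcocom
    refine actsTriviallyOn_of_conv_char_eq_smul ρ hL.1 hlam_mem hlam_cocom hlam1 ?_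
    rw [hlam_decomp, conv_sum_right, Finset.sum_congr rfl h, Finset.smul_sum]

/-- (Proposition 5.9) A character `χ` of a finite-dimensional
`A`-module lies in `C(A//L)` iff `χ F_j = χ(1) F_j` for all `j ∈ J_L`,
where `λ_L = Σ_{j ∈ J_L} F_j`. -/
theorem char_in_quot_iff_absorbs_idempotents
    {k : Type*} [Field k] [IsAlgClosed k] [CharZero k]
    {A : Type*} [Ring A] [HopfAlgebra k A] [FiniteDimensional k A] [IsSemisimpleRing A]
    (hCAcomm : ∀ f g : Module.Dual k A, IsCocom f → IsCocom g → conv k A f g = conv k A g f)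
    (n : ℕ) (F : Fin n → Module.Dual k A)
    (hFcocom : ∀ j, IsCocom (F j))
    (hFidem : ∀ j, conv k A (F j) (F j) = F j)
    (hForth : ∀ i j, i ≠ j → conv k A (F i) (F j) = 0)
    (hFsum : ∑ j, F j = Coalgebra.counit (R := k))
    (hFprim : ∀ j, ∀ f g : Module.Dual k A, IsCocom f → IsCocom g →
      conv k A f f = f → conv k A g g = g → conv k A f g = 0 → f + g = F j → f = 0 ∨ g = 0)
    (Λ : A) (hΛint : ∀ a : A, a * Λ = Coalgebra.counit (R := k) a • Λ)
    (hΛ1 : Coalgebra.counit (R := k) Λ = 1)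
    (L : Subalgebra k A) (hL : IsLNCS L) (J : Finset (Fin n))
    (lamL : Module.Dual k A) (hlam_mem : lamL ∈ dualQuot (Subalgebra.toSubmodule L))
    (hlam_int : ∀ f ∈ dualQuot (Subalgebra.toSubmodule L), conv k A f lamL = f 1 • lamL)
    (hlam1 : lamL 1 = 1) (hlam_decomp : lamL = ∑ j ∈ J, F j)
    {V : Type*} [AddCommGroup V] [Module k V] [FiniteDimensional k V]
    (ρ : A →ₐ[k] Module.End k V) :
    ActsTriviallyOn ρ (L : Set A) ↔
      ∀ j ∈ J, conv k A (char ρ) (F j) = char ρ 1 • F j :=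
  char_in_quot_iff_absorbs_idempotents_general n F hFcocom hFidem hForth L hL J lamL hlam_mem
    hlam_int hlam1 hlam_decomp ρ
end

section
/- Let (A,R) be a semisimple quasitriangular Hopf algebra, L a normal Hopf subalgebra of A, and L* := φ_R((A//L)*). Then every element of L commutes with every element of L*: ml = lm for all l ∈ L, m ∈ L*. -/
open scoped TensorProduct
open Coalgebra

/-! Quasitriangularity makes the monodromy `Q = R₂₁R` commute with `Δ(A)`. Hence
`φ_R(f) = (f ⊗ id)(Q)` commutes with `l` as soon as `f(u l₁) = ε(l₁) f(u) = f(l₁ u)` for the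
first tensor legs `l₁` of `Δ(l)`. For `l ∈ L` these legs lie in `L`, and `f ∈ (A//L)*` is right
`L`-invariant by definition and left `L`-invariant because `l a = a₁ S(a₂) l a₃` with
`S(a₂) l a₃ ∈ L` by normality. -/

open HopfAlgebra

lemma Coalgebra.sum_counit_right_smul {R A : Type*} [CommSemiring R] [AddCommMonoid A]
    [Module R A] [Coalgebra R A] {a : A} {ι : Type*} (r : Repr R a ι) :
    ∑ i ∈ r.index, counit (R := R) (r.right i) • r.left i = a := by
  simpa only [map_sum, _root_.TensorProduct.rid_tmul, one_smul]
    using congrArg (_root_.TensorProduct.rid R A) (sum_tmul_counit_eq r)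

namespace Burciu

variable {k : Type*} [Field k] {A : Type*} [Ring A] [HopfAlgebra k A] {ι : Type*}

lemma adR_tmul {a : A} (r : Repr k a ι) (l : A) :
    adR k A (a ⊗ₜ[k] l) = ∑ i ∈ r.index, antipode k (r.left i) * (l * r.right i) := by
  simp only [adR, LinearMap.coe_comp, Function.comp_apply, LinearEquiv.coe_coe,
    LinearMap.rTensor_tmul, ← r.eq, TensorProduct.sum_tmul, map_sum,
    TensorProduct.assoc_tmul, LinearMap.lTensor_tmul, TensorProduct.comm_tmul,
    TensorProduct.assoc_symm_tmul, LinearMap.mul'_apply, mul_assoc]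

lemma counit_adR_tmul (a l : A) :
    counit (R := k) (adR k A (a ⊗ₜ[k] l)) = counit (R := k) l * counit (R := k) a := by
  conv_rhs => rw [← sum_counit_smul (ℛ k a)]
  simp only [adR_tmul (ℛ k a), map_sum, map_smul, Bialgebra.counit_mul, counit_antipode,
    smul_eq_mul, Finset.mul_sum]
  exact Finset.sum_congr rfl fun i _ => by ring

lemma mul_eq_sum_mul_adR (l : A) {a : A} (r : Repr k a ι) :
    l * a = ∑ i ∈ r.index, r.left i * adR k A (r.right i ⊗ₜ[k] l) := by
  let T : A ⊗[k] (A ⊗[k] A) →ₗ[k] A := LinearMap.mul' k A ∘ₗ LinearMap.lTensor A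
    (LinearMap.mul' k A ∘ₗ TensorProduct.map (antipode k) (LinearMap.mulLeft k l))
  have coassoc := congrArg T
    (sum_tmul_tmul_eq r (fun i ↦ ℛ k (r.left i)) (fun i ↦ ℛ k (r.right i)))
  simp only [T, map_sum, LinearMap.comp_apply, LinearMap.lTensor_tmul, TensorProduct.map_tmul,
    LinearMap.mul'_apply, LinearMap.mulLeft_apply] at coassoc
  calc l * a = ∑ i ∈ r.index, counit (R := k) (r.left i) • (l * r.right i) := by
        simp only [← mul_smul_comm, ← Finset.mul_sum, sum_counit_smul]
    _ = ∑ i ∈ r.index, ∑ j ∈ (ℛ k (r.left i)).index, (ℛ k (r.left i)).left j *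
          (antipode k ((ℛ k (r.left i)).right j) * (l * r.right i)) := by
        simp only [← mul_assoc, ← Finset.sum_mul, sum_mul_antipode_eq_smul, smul_mul_assoc,
          one_mul]
    _ = _ := by
        simp only [coassoc, adR_tmul (ℛ k _), Finset.mul_sum]

lemma apply_mul_of_mem_dualQuot {L : Subalgebra k A}
    (hadR : ∀ a : A, ∀ x ∈ L, adR k A (a ⊗ₜ[k] x) ∈ L)
    {f : Module.Dual k A} (hf : f ∈ dualQuot (Subalgebra.toSubmodule L))
    {l : A} (hl : l ∈ L) (a : A) :
    f (l * a) = counit (R := k) l * f a := by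
  conv_rhs => rw [← sum_counit_right_smul (ℛ k a)]
  simp only [mul_eq_sum_mul_adR l (ℛ k a), map_sum, map_smul, smul_eq_mul, Finset.mul_sum]
  refine Finset.sum_congr rfl fun i _ ↦ ?_
  rw [hf _ _ (hadR _ l hl), counit_adR_tmul]
  ring

lemma IsHopfSubalgebra.exists_repr_left_mem {L : Subalgebra k A} (hL : IsHopfSubalgebra L)
    {l : A} (hl : l ∈ L) : ∃ r : Repr k l (L × L), ∀ i, r.left i ∈ L := by
  classical
  obtain ⟨t, ht⟩ := hL.1 l hl
  obtain ⟨S, rfl⟩ := TensorProduct.exists_finset (R := k) t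
  refine ⟨⟨S, fun p ↦ p.1, fun p ↦ p.2, ?_⟩, fun p ↦ p.1.2⟩
  simp only [map_sum, TensorProduct.map_tmul] at ht
  exact ht

lemma lid_rTensor_mul_comul {f : Module.Dual k A} {l : A} (r : Repr k l ι)
    (hf : ∀ i ∈ r.index, ∀ u : A, f (u * r.left i) = counit (R := k) (r.left i) * f u)
    (q : A ⊗[k] A) :
    TensorProduct.lid k A (LinearMap.rTensor A f (q * comul l)) =
      TensorProduct.lid k A (LinearMap.rTensor A f q) * l := by
  induction q using TensorProduct.induction_on with
  | zero => simp
  | tmul u v =>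
    conv_rhs => rw [← sum_counit_smul r]
    simp only [← r.eq, Finset.mul_sum, Algebra.TensorProduct.tmul_mul_tmul, map_sum,
      LinearMap.rTensor_tmul, TensorProduct.lid_tmul, smul_mul_assoc, mul_smul_comm]
    refine Finset.sum_congr rfl fun i hi ↦ ?_
    rw [hf i hi, mul_smul]
  | add q q' hq hq' => simp only [add_mul, map_add, hq, hq']

lemma lid_rTensor_comul_mul {f : Module.Dual k A} {l : A} (r : Repr k l ι)
    (hf : ∀ i ∈ r.index, ∀ u : A, f (r.left i * u) = counit (R := k) (r.left i) * f u)
    (q : A ⊗[k] A) :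
    TensorProduct.lid k A (LinearMap.rTensor A f (comul l * q)) =
      l * TensorProduct.lid k A (LinearMap.rTensor A f q) := by
  induction q using TensorProduct.induction_on with
  | zero => simp
  | tmul u v =>
    conv_rhs => rw [← sum_counit_smul r]
    simp only [← r.eq, Finset.sum_mul, Algebra.TensorProduct.tmul_mul_tmul, map_sum,
      LinearMap.rTensor_tmul, TensorProduct.lid_tmul, smul_mul_assoc, mul_smul_comm,
      Finset.smul_sum]
    refine Finset.sum_congr rfl fun i hi ↦ ?_
    rw [hf i hi, mul_comm, mul_smul]
  | add q q' hq hq' => simp only [mul_add, map_add, hq, hq']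

lemma Qmat_mul_comul_comm {R : A ⊗[k] A} (hR : IsRMatrix k A R) (x : A) :
    Qmat k A R * comul x = comul x * Qmat k A R := by
  let τ := Algebra.TensorProduct.comm k A A
  have quasi : R * comul x = τ (comul x) * R := hR.quasi x
  have τ_involutive : τ (τ (comul x)) = comul x := TensorProduct.comm_comm k A A _
  calc τ R * R * comul x = τ R * τ (comul x) * R := by rw [mul_assoc, quasi, ← mul_assoc]
    _ = τ (τ (comul x) * R) * R := by rw [← quasi, map_mul]
    _ = comul x * (τ R * R) := by rw [map_mul, τ_involutive, mul_assoc]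

end Burciu

open Burciu

theorem Lstar_commutes_with_L_general
    {k : Type*} [Field k]
    {A : Type*} [Ring A] [HopfAlgebra k A]
    (R : A ⊗[k] A) (hR : IsRMatrix k A R)
    (L : Subalgebra k A) (hL : IsNormalHopfSubalgebra L) :
    ∀ l ∈ L, ∀ m ∈ phiR k A R '' dualQuot (Subalgebra.toSubmodule L), m * l = l * m := by
  rintro l hl m ⟨f, hf, rfl⟩
  obtain ⟨r, hr⟩ := IsHopfSubalgebra.exists_repr_left_mem hL.1 hl
  calc phiR k A R f * l = TensorProduct.lid k A (LinearMap.rTensor A f (Qmat k A R * comul l)) :=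
        (lid_rTensor_mul_comul r (fun i _ u ↦ hf u _ (hr i)) _).symm
    _ = TensorProduct.lid k A (LinearMap.rTensor A f (comul l * Qmat k A R)) := by
        rw [Qmat_mul_comul_comm hR]
    _ = l * phiR k A R f :=
        lid_rTensor_comul_mul r (fun i _ u ↦ apply_mul_of_mem_dualQuot hL.2.2 hf (hr i) u) _

/-- For a semisimple quasitriangular Hopf algebra `(A, R)` and
a normal Hopf subalgebra `L`, every element of `L* = φ_R((A//L)*)` commutes
with every element of `L`. -/
theorem Lstar_commutes_with_L
    {k : Type*} [Field k] [IsAlgClosed k] [CharZero k]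
    {A : Type*} [Ring A] [HopfAlgebra k A] [FiniteDimensional k A] [IsSemisimpleRing A]
    (R : A ⊗[k] A) (hR : IsRMatrix k A R)
    (L : Subalgebra k A) (hL : IsNormalHopfSubalgebra L) :
    ∀ l ∈ L, ∀ m ∈ phiR k A R '' dualQuot (Subalgebra.toSubmodule L), m * l = l * m :=
  Lstar_commutes_with_L_general R hR L hL
end
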